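/- arXiv:math/0505052 — 10 statements merged into one kernel-verified Lean document; each statement's English description precedes it below -/
import Mathlib

section
/- Let p be an odd prime. In (ZMod p)[ξ, η] one has the identity ∏_{i=0}^{p−1} ∏_{j=0}^{p−1} (1 + i·ξ + j·η) = 1 − q + r^(p−1). -/
/-! Over `𝔽_p` one has `∏_c (T - c) = T^p - T`; homogenised, `∏_c (a + c b) = a^p - a b^(p-1)`
in any domain of characteristic `p`. The inner product over `j` (with `a = 1 + iξ`, `b = η`)
thus becomes, by Frobenius, `(1 - η^(p-1)) + i·ξ(ξ^(p-1) - η^(p-1))`, again of the form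
`a + i b`; the same identity applied to the outer product and expanded gives `1 - q + r^(p-1)`.
-/

open Polynomial in
theorem FiniteField.prod_X_sub_C (K : Type*) [Field K] [Fintype K] :
    ∏ a : K, (X - C a) = X ^ Fintype.card K - X := by
  have hcard : 1 < Fintype.card K := Fintype.one_lt_card
  have hmonic : (X ^ Fintype.card K - X : K[X]).Monic :=
    monic_X_pow_sub (by rw [degree_X]; exact_mod_cast hcard)
  have h := prod_multiset_X_sub_C_of_monic_of_roots_card_eq hmonic (by
    rw [roots_X_pow_card_sub_X, X_pow_card_sub_X_natDegree_eq K hcard]; rfl)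
  rwa [roots_X_pow_card_sub_X] at h

theorem FiniteField.prod_add_map_mul_of_field {F L : Type*} [Field F] [Fintype F] [Field L]
    (φ : F →+* L) (x y : L) :
    ∏ c : F, (x + φ c * y) = x ^ Fintype.card F - x * y ^ (Fintype.card F - 1) := by
  obtain ⟨n, hn⟩ : ∃ n, Fintype.card F = n + 2 :=
    ⟨Fintype.card F - 2, by have : 1 < Fintype.card F := Fintype.one_lt_card; omega⟩
  rw [hn, show n + 2 - 1 = n + 1 by omega]
  rcases eq_or_ne y 0 with rfl | hy
  · simp [hn, pow_succ]
  have hroots : ∏ c : F, (x / y - φ c) = (x / y) ^ (n + 2) - x / y := by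
    simpa [hn, Polynomial.eval_prod, Polynomial.map_prod] using
      congrArg (fun P => (P.map φ).eval (x / y)) (FiniteField.prod_X_sub_C F)
  calc ∏ c : F, (x + φ c * y) = ∏ c : F, y * (x / y - φ c) :=
        Fintype.prod_equiv (Equiv.neg F) _ _ fun c => by field_simp; simp [mul_comm]
    _ = y ^ (n + 2) * ((x / y) ^ (n + 2) - x / y) := by
        rw [Finset.prod_mul_distrib, Finset.prod_const, Finset.card_univ, hn, hroots]
    _ = x ^ (n + 2) - x * y ^ (n + 1) := by
        rw [div_pow, mul_sub, mul_div_cancel₀ _ (pow_ne_zero _ hy)]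
        field_simp
        ring

theorem FiniteField.prod_add_map_mul {F R : Type*} [Field F] [Fintype F] [CommRing R] [IsDomain R]
    (φ : F →+* R) (x y : R) :
    ∏ c : F, (x + φ c * y) = x ^ Fintype.card F - x * y ^ (Fintype.card F - 1) := by
  apply IsFractionRing.injective R (FractionRing R)
  simpa using prod_add_map_mul_of_field ((algebraMap R (FractionRing R)).comp φ)
    (algebraMap R _ x) (algebraMap R _ y)

theorem ZMod.prod_range_natCast (n : ℕ) [NeZero n] {M : Type*} [CommMonoid M] (f : ZMod n → M) :
    ∏ j ∈ Finset.range n, f j = ∏ c : ZMod n, f c :=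
  Finset.prod_nbij' (fun j : ℕ => (j : ZMod n)) ZMod.val
    (fun _ _ => Finset.mem_univ _)
    (fun c _ => Finset.mem_range.2 (ZMod.val_lt c))
    (fun _ hj => ZMod.val_natCast_of_lt (Finset.mem_range.1 hj))
    (fun c _ => ZMod.natCast_zmod_val c)
    (fun _ _ => rfl)

open MvPolynomial

theorem stmt_1_general (p : ℕ) (hp : p.Prime)
    (q r : MvPolynomial (Fin 2) (ZMod p))
    (hq : q = X 1 ^ (p ^ 2 - p) +
      X 0 ^ (p - 1) * (X 0 ^ (p - 1) - X 1 ^ (p - 1)) ^ (p - 1))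
    (hr : r = X 0 * X 1 * (X 0 ^ (p - 1) - X 1 ^ (p - 1))) :
    ∏ i ∈ Finset.range p, ∏ j ∈ Finset.range p,
        (1 + C (i : ZMod p) * X 0 + C (j : ZMod p) * X 1) = 1 - q + r ^ (p - 1) := by
  have := Fact.mk hp
  subst hq hr
  have hprod (a b : MvPolynomial (Fin 2) (ZMod p)) :
      ∏ j ∈ Finset.range p, (a + C (j : ZMod p) * b) = a ^ p - a * b ^ (p - 1) := by
    rw [ZMod.prod_range_natCast p (fun c => a + C c * b)]
    simpa using FiniteField.prod_add_map_mul (C : ZMod p →+* _) a b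
  have hXp : (X 0 : MvPolynomial (Fin 2) (ZMod p)) ^ p = X 0 * X 0 ^ (p - 1) := by
    rw [← pow_succ', Nat.sub_add_cancel hp.one_le]
  have hrow (i : ℕ) : ∏ j ∈ Finset.range p,
      (1 + C (i : ZMod p) * X 0 + C (j : ZMod p) * X 1 : MvPolynomial (Fin 2) (ZMod p)) =
      (1 - X 1 ^ (p - 1)) + C (i : ZMod p) * (X 0 * (X 0 ^ (p - 1) - X 1 ^ (p - 1))) := by
    rw [hprod, add_pow_char, mul_pow, ← map_pow, ZMod.pow_card, one_pow, hXp]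
    ring
  have hexp : (p - 1) * p = p ^ 2 - p := by rw [Nat.sub_mul, one_mul, sq]
  rw [Finset.prod_congr rfl fun i _ => hrow i, hprod, sub_pow_char, one_pow, ← pow_mul, hexp,
    mul_pow, mul_pow, mul_pow]
  ring

/-- Let `p` be an odd prime.  Writing `ξ = X 0`, `η = X 1` in `(ZMod p)[ξ, η]`, with
`q = η^(p²-p) + ξ^(p-1)·(ξ^(p-1) - η^(p-1))^(p-1)` and `r = ξ·η·(ξ^(p-1) - η^(p-1))`,
one has `∏_{i=0}^{p-1} ∏_{j=0}^{p-1} (1 + i·ξ + j·η) = 1 - q + r^(p-1)`. -/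
theorem stmt_1 (p : ℕ) (hp : p.Prime) (hodd : Odd p)
    (q r : MvPolynomial (Fin 2) (ZMod p))
    (hq : q = X 1 ^ (p ^ 2 - p) +
      X 0 ^ (p - 1) * (X 0 ^ (p - 1) - X 1 ^ (p - 1)) ^ (p - 1))
    (hr : r = X 0 * X 1 * (X 0 ^ (p - 1) - X 1 ^ (p - 1))) :
    ∏ i ∈ Finset.range p, ∏ j ∈ Finset.range p,
        (1 + C (i : ZMod p) * X 0 + C (j : ZMod p) * X 1) = 1 - q + r ^ (p - 1) :=
  stmt_1_general p hp q r hq hr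
end

section
/- Let p be an odd prime. In the polynomial ring (ZMod p)[t, ξ, η] in three variables one has the identity ∏_{(i,j) ∈ (ZMod p)² \ {(0,0)}} (t + i·ξ + j·η) = t^(p²−1) − q·t^(p−1) + r^(p−1), where q and r are regarded as polynomials in ξ and η. -/
/-!
Adjoining the factor `t` for `(i, j) = (0, 0)`, the product runs over all of `𝔽_p²`. Over a single
variable, homogenizing `∏_{a ∈ 𝔽_p} (X - a) = X^p - X` gives `∏_a (z + a·A) = z^p - A^(p-1)·z`,
which is additive in `z`. Taking the product over `i` first therefore gives `L + j·M` with
`L = t^p - ξ^(p-1)·t` and `M = η^p - ξ^(p-1)·η`, and the product over `j` then gives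
`L^p - M^(p-1)·L`. Expanding this with the Frobenius yields `t` times the claimed right-hand
side, and `t` cancels in the fraction field.
-/

open MvPolynomial Finset

namespace FiniteField

variable {F : Type*} [Field F] [Fintype F]

theorem prod_X_sub_C_eq_X_pow_card_sub_X :
    ∏ a : F, (Polynomial.X - Polynomial.C a) = Polynomial.X ^ Fintype.card F - Polynomial.X := by
  have hmonic : (Polynomial.X ^ Fintype.card F - Polynomial.X : Polynomial F).Monic :=
    Polynomial.monic_X_pow_sub (by simpa using Fintype.one_lt_card)
  have hroots := roots_X_pow_card_sub_X F
  rw [← Polynomial.prod_multiset_X_sub_C_of_monic_of_roots_card_eq hmonic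
    (by rw [hroots, X_pow_card_sub_X_natDegree_eq F Fintype.one_lt_card]; rfl), hroots]
  rfl

variable {K : Type*} [Field K] [Algebra F K]

theorem prod_add_algebraMap (w : K) :
    ∏ a : F, (w + algebraMap F K a) = w ^ Fintype.card F - w := by
  have h := congrArg (Polynomial.aeval w) (prod_X_sub_C_eq_X_pow_card_sub_X (F := F))
  simp only [map_prod, map_sub, map_pow, Polynomial.aeval_X, Polynomial.aeval_C] at h
  rw [← h]
  exact Fintype.prod_equiv (Equiv.neg F) _ _ fun a => by simp [sub_eq_add_neg]

theorem prod_add_algebraMap_mul (z A : K) :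
    ∏ a : F, (z + algebraMap F K a * A) = z ^ Fintype.card F - A ^ (Fintype.card F - 1) * z := by
  have hq : 1 < Fintype.card F := Fintype.one_lt_card
  rcases eq_or_ne A 0 with rfl | hA
  · simp [zero_pow (Nat.sub_ne_zero_of_lt hq)]
  · calc ∏ a : F, (z + algebraMap F K a * A) = ∏ a : F, (A * (z / A + algebraMap F K a)) :=
          prod_congr rfl fun a _ => by field_simp
      _ = A ^ Fintype.card F * ((z / A) ^ Fintype.card F - z / A) := by
          rw [prod_mul_distrib, prod_const, card_univ, prod_add_algebraMap]
      _ = z ^ Fintype.card F - A ^ (Fintype.card F - 1) * z := by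
          rw [mul_sub, div_pow, mul_div_cancel₀ _ (pow_ne_zero _ hA), pow_sub₀ _ hA hq.le, pow_one]
          ring

end FiniteField

section Dickson

variable {p : ℕ} [Fact p.Prime]

theorem ZMod.prod_prod_add_algebraMap_mul {K : Type*} [Field K] [Algebra (ZMod p) K]
    (T A B : K) :
    ∏ ij : ZMod p × ZMod p,
        (T + algebraMap (ZMod p) K ij.1 * A + algebraMap (ZMod p) K ij.2 * B) =
      (T ^ p - A ^ (p - 1) * T) ^ p -
        (B ^ p - A ^ (p - 1) * B) ^ (p - 1) * (T ^ p - A ^ (p - 1) * T) := by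
  have : CharP K p := charP_of_injective_algebraMap (algebraMap (ZMod p) K).injective p
  have inner (j : ZMod p) :
      ∏ i : ZMod p, (T + algebraMap (ZMod p) K i * A + algebraMap (ZMod p) K j * B) =
        (T ^ p - A ^ (p - 1) * T) + algebraMap (ZMod p) K j * (B ^ p - A ^ (p - 1) * B) := by
    simp_rw [add_right_comm T]
    rw [FiniteField.prod_add_algebraMap_mul, ZMod.card, add_pow_char, mul_pow, ← map_pow,
      ZMod.pow_card]
    ring
  rw [Fintype.prod_prod_type, prod_comm]
  simp_rw [inner]
  rw [FiniteField.prod_add_algebraMap_mul, ZMod.card]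

theorem dickson_identity {R : Type*} [CommRing R] [CharP R p] (T A B : R) :
    (T ^ p - A ^ (p - 1) * T) ^ p -
        (B ^ p - A ^ (p - 1) * B) ^ (p - 1) * (T ^ p - A ^ (p - 1) * T) =
      T * (T ^ (p ^ 2 - 1) -
        (B ^ (p ^ 2 - p) + A ^ (p - 1) * (A ^ (p - 1) - B ^ (p - 1)) ^ (p - 1)) * T ^ (p - 1) +
        (A * B * (A ^ (p - 1) - B ^ (p - 1))) ^ (p - 1)) := by
  obtain ⟨k, rfl⟩ : ∃ k, p = k + 1 :=
    ⟨p - 1, (Nat.succ_pred_eq_of_pos (Fact.out : p.Prime).pos).symm⟩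
  simp only [Nat.add_sub_cancel]
  have hsign : (-1 : R) ^ k = 1 := by
    linear_combination (-1 : R) * (pow_succ (-1 : R) k).symm.trans (neg_one_pow_char R (k + 1))
  have hneg : (B ^ k - A ^ k) ^ k = (A ^ k - B ^ k) ^ k := by
    rw [← neg_sub, neg_pow, hsign, one_mul]
  have hfrobT := sub_pow_char (T ^ k) (A ^ k)
  have hfrob := sub_pow_char (A ^ k) (B ^ k)
  rw [show (k + 1) ^ 2 - 1 = (k + 1) * k + k by ring_nf; omega,
    show (k + 1) ^ 2 - (k + 1) = (k + 1) * k by ring_nf; omega,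
    show T ^ (k + 1) - A ^ k * T = T * (T ^ k - A ^ k) by ring,
    show B ^ (k + 1) - A ^ k * B = B * (B ^ k - A ^ k) by ring,
    mul_pow, hfrobT, mul_pow, hneg, mul_pow, mul_pow]
  linear_combination T ^ (k + 1) * hfrob

theorem ZMod.prod_sdiff_zero_add_algebraMap_mul {K : Type*} [Field K] [Algebra (ZMod p) K]
    {T : K} (hT : T ≠ 0) (A B : K) :
    ∏ ij ∈ (univ : Finset (ZMod p × ZMod p)) \ {(0, 0)},
        (T + algebraMap (ZMod p) K ij.1 * A + algebraMap (ZMod p) K ij.2 * B) =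
      T ^ (p ^ 2 - 1) -
        (B ^ (p ^ 2 - p) + A ^ (p - 1) * (A ^ (p - 1) - B ^ (p - 1)) ^ (p - 1)) * T ^ (p - 1) +
        (A * B * (A ^ (p - 1) - B ^ (p - 1))) ^ (p - 1) := by
  have : CharP K p := charP_of_injective_algebraMap (algebraMap (ZMod p) K).injective p
  apply mul_left_cancel₀ hT
  rw [← dickson_identity, ← ZMod.prod_prod_add_algebraMap_mul, sdiff_singleton_eq_erase,
    ← mul_prod_erase univ _ (mem_univ (0, 0))]
  simp

end Dickson

theorem stmt_2_general (p : ℕ) [Fact p.Prime]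
    (q r : MvPolynomial (Fin 3) (ZMod p))
    (hq : q = X 2 ^ (p ^ 2 - p) +
      X 1 ^ (p - 1) * (X 1 ^ (p - 1) - X 2 ^ (p - 1)) ^ (p - 1))
    (hr : r = X 1 * X 2 * (X 1 ^ (p - 1) - X 2 ^ (p - 1))) :
    ∏ ij ∈ (Finset.univ : Finset (ZMod p × ZMod p)) \ {(0, 0)},
        (X 0 + C ij.1 * X 1 + C ij.2 * X 2) =
      X 0 ^ (p ^ 2 - 1) - q * X 0 ^ (p - 1) + r ^ (p - 1) := by
  subst hq hr
  let K := FractionRing (MvPolynomial (Fin 3) (ZMod p))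
  have hinj : Function.Injective (algebraMap (MvPolynomial (Fin 3) (ZMod p)) K) :=
    IsFractionRing.injective _ _
  apply hinj
  simp only [map_prod, map_add, map_mul, map_sub, map_pow, ← MvPolynomial.algebraMap_eq,
    ← IsScalarTower.algebraMap_apply]
  exact ZMod.prod_sdiff_zero_add_algebraMap_mul ((map_ne_zero_iff _ hinj).mpr (X_ne_zero 0)) _ _

/-- Let `p` be an odd prime.  In `(ZMod p)[t, ξ, η]` (with `t = X 0`, `ξ = X 1`,
`η = X 2`), setting `q = η^(p²-p) + ξ^(p-1)·(ξ^(p-1) - η^(p-1))^(p-1)` and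
`r = ξ·η·(ξ^(p-1) - η^(p-1))`, one has
`∏_{(i,j) ∈ (ZMod p)² \ {(0,0)}} (t + i·ξ + j·η) = t^(p²-1) - q·t^(p-1) + r^(p-1)`. -/
theorem stmt_2 (p : ℕ) [Fact p.Prime] (hodd : Odd p)
    (q r : MvPolynomial (Fin 3) (ZMod p))
    (hq : q = X 2 ^ (p ^ 2 - p) +
      X 1 ^ (p - 1) * (X 1 ^ (p - 1) - X 2 ^ (p - 1)) ^ (p - 1))
    (hr : r = X 1 * X 2 * (X 1 ^ (p - 1) - X 2 ^ (p - 1))) :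
    ∏ ij ∈ (Finset.univ : Finset (ZMod p × ZMod p)) \ {(0, 0)},
        (X 0 + C ij.1 * X 1 + C ij.2 * X 2) =
      X 0 ^ (p ^ 2 - 1) - q * X 0 ^ (p - 1) + r ^ (p - 1) :=
  stmt_2_general p q r hq hr
end

section
/- Let p be an odd prime. In (ZMod p)[ξ, η] one has ξ^(p²−1) − q·ξ^(p−1) + r^(p−1) = 0 and η^(p²−1) − q·η^(p−1) + r^(p−1) = 0. -/
/-!
Put `a = ξ^(p-1)` and `b = η^(p-1)`. Then `q = b^p + a (a - b)^(p-1)` and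
`r^(p-1) = a b (a - b)^(p-1)`, so the identity for `η` is a ring identity in `a, b`, while the
one for `ξ` reduces to `a (a^p - b^p - (a - b)^p) = 0`, i.e. to the Frobenius being additive.
-/

open MvPolynomial

section

variable {R : Type*} [CommRing R]

lemma pow_sq_sub_one_eq_pow_sub_one_pow (x : R) (p : ℕ) :
    x ^ (p ^ 2 - 1) = (x ^ (p - 1)) ^ (p + 1) := by
  rw [← pow_mul, Nat.sub_one_mul, Nat.mul_add_one, ← sq, Nat.add_comm p 1, Nat.add_sub_add_right]

lemma pow_sq_sub_self_eq_pow_sub_one_pow (x : R) (p : ℕ) :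
    x ^ (p ^ 2 - p) = (x ^ (p - 1)) ^ p := by
  rw [← pow_mul, Nat.sub_one_mul, ← sq]

lemma relation_fst_of_charP (p : ℕ) [Fact p.Prime] [CharP R p] (a b : R) :
    a ^ (p + 1) - (b ^ p + a * (a - b) ^ (p - 1)) * a + a * b * (a - b) ^ (p - 1) = 0 := by
  have frobenius : (a - b) ^ (p - 1) * (a - b) = a ^ p - b ^ p := by
    rw [← pow_succ, Nat.sub_add_cancel (Fact.out : p.Prime).one_le, sub_pow_char]
  linear_combination -(a * frobenius)

lemma relation_snd (p : ℕ) (a b : R) :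
    b ^ (p + 1) - (b ^ p + a * (a - b) ^ (p - 1)) * b + a * b * (a - b) ^ (p - 1) = 0 := by
  ring

end

theorem stmt_5_general (p : ℕ) (hp : p.Prime)
    (q r : MvPolynomial (Fin 2) (ZMod p))
    (hq : q = X 1 ^ (p ^ 2 - p) +
      X 0 ^ (p - 1) * (X 0 ^ (p - 1) - X 1 ^ (p - 1)) ^ (p - 1))
    (hr : r = X 0 * X 1 * (X 0 ^ (p - 1) - X 1 ^ (p - 1))) :
    X 0 ^ (p ^ 2 - 1) - q * X 0 ^ (p - 1) + r ^ (p - 1) = 0 ∧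
    X 1 ^ (p ^ 2 - 1) - q * X 1 ^ (p - 1) + r ^ (p - 1) = 0 := by
  have := Fact.mk hp
  have hr' : r ^ (p - 1) =
      X 0 ^ (p - 1) * X 1 ^ (p - 1) * (X 0 ^ (p - 1) - X 1 ^ (p - 1)) ^ (p - 1) := by
    rw [hr, mul_pow, mul_pow]
  rw [hq, hr', pow_sq_sub_self_eq_pow_sub_one_pow, pow_sq_sub_one_eq_pow_sub_one_pow,
    pow_sq_sub_one_eq_pow_sub_one_pow]
  exact ⟨relation_fst_of_charP p _ _, relation_snd p _ _⟩

/-- Let `p` be an odd prime.  Writing `ξ = X 0`, `η = X 1` in `(ZMod p)[ξ, η]`, with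
`q = η^(p²-p) + ξ^(p-1)·(ξ^(p-1) - η^(p-1))^(p-1)` and `r = ξ·η·(ξ^(p-1) - η^(p-1))`,
one has `ξ^(p²-1) - q·ξ^(p-1) + r^(p-1) = 0` and `η^(p²-1) - q·η^(p-1) + r^(p-1) = 0`. -/
theorem stmt_5 (p : ℕ) (hp : p.Prime) (hodd : Odd p)
    (q r : MvPolynomial (Fin 2) (ZMod p))
    (hq : q = X 1 ^ (p ^ 2 - p) +
      X 0 ^ (p - 1) * (X 0 ^ (p - 1) - X 1 ^ (p - 1)) ^ (p - 1))
    (hr : r = X 0 * X 1 * (X 0 ^ (p - 1) - X 1 ^ (p - 1))) :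
    X 0 ^ (p ^ 2 - 1) - q * X 0 ^ (p - 1) + r ^ (p - 1) = 0 ∧
    X 1 ^ (p ^ 2 - 1) - q * X 1 ^ (p - 1) + r ^ (p - 1) = 0 :=
  stmt_5_general p hp q r hq hr
end

section
/- Let p be an odd prime. The quotient of (ZMod p)[ξ, η] by the ideal generated by q and r is a (ZMod p)-vector space of dimension p·(p² − 1). -/
/-!
In `A = 𝔽_p[ξ, η]`, `r = ξ η (ξ^(p-1) - η^(p-1)) = η ∏_{a ∈ 𝔽_p} (ξ - a η)` is the product of
the `p + 1` lines through the origin. None of them divides `q`, so each is a nonzerodivisor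
modulo `q`, and the exact sequences `0 → A/(q, w) → A/(q, ℓ w) → A/(q, ℓ) → 0` make the length
of `A/(q, r)` the sum of the lengths of the `A/(q, ℓ)`. On every line `q` restricts to a monomial
of degree `p² - p` in the remaining variable (`η^(p²-p)` on `ξ = a η`, `ξ^(p²-p)` on `η = 0`),
so the dimension is `(p + 1)(p² - p) = p (p² - 1)`.
-/

section LengthOfQuotients

open Ideal

variable {R A B : Type*} [CommRing R] [CommRing A] [CommRing B] [Algebra R A] [Algebra R B]

theorem Module.finrank_eq_toNat_length (K M : Type*) [DivisionRing K] [AddCommGroup M]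
    [Module K M] :
    Module.finrank K M = (Module.length K M).toNat := by
  rw [Module.length_eq_rank]
  rfl

theorem Ideal.mem_sup_span_singleton {I : Ideal A} {x y : A} :
    x ∈ I ⊔ span {y} ↔ ∃ a, x - a * y ∈ I := by
  rw [sup_comm, mem_span_singleton_sup]
  exact ⟨fun ⟨a, b, hb, h⟩ ↦ ⟨a, by rwa [← h, add_sub_cancel_left]⟩,
    fun ⟨a, h⟩ ↦ ⟨a, _, h, add_sub_cancel _ _⟩⟩

theorem Ideal.mem_span_singleton_of_mul_mem_of_isRelPrime [DecompositionMonoid A] {Q f : A}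
    (h : IsRelPrime Q f) {x : A} (hx : f * x ∈ span {Q}) : x ∈ span {Q} :=
  mem_span_singleton.2 (h.dvd_of_dvd_mul_left (mem_span_singleton.1 hx))

theorem Ideal.length_quotient_sup_span_mul (I : Ideal A) {f : A} (hf : ∀ x, f * x ∈ I → x ∈ I)
    (w : A) :
    Module.length R (A ⧸ I ⊔ span {f * w}) =
      Module.length R (A ⧸ I ⊔ span {w}) + Module.length R (A ⧸ I ⊔ span {f}) := by
  have hmul : I ⊔ span {w} ≤ Submodule.comap (LinearMap.mulLeft A f) (I ⊔ span {f * w}) := by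
    intro x hx
    obtain ⟨a, ha⟩ := mem_sup_span_singleton.1 hx
    exact mem_sup_span_singleton.2 ⟨a, by simpa [mul_sub, mul_left_comm] using I.mul_mem_left f ha⟩
  have hle : I ⊔ span {f * w} ≤ I ⊔ span {f} :=
    sup_le_sup_left (span_singleton_le_span_singleton.2 (dvd_mul_right f w)) _
  refine Module.length_eq_add_of_exact
    ((Submodule.mapQ _ _ (LinearMap.mulLeft A f) hmul).restrictScalars R)
    (Quotient.factorₐ R hle).toLinearMap ?_ (Quotient.factor_surjective hle) ?_
  · refine (injective_iff_map_eq_zero _).2 fun x hx ↦ ?_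
    obtain ⟨x, rfl⟩ := Submodule.Quotient.mk_surjective _ x
    simp only [LinearMap.restrictScalars_apply, Submodule.mapQ_apply, LinearMap.mulLeft_apply,
      Submodule.Quotient.mk_eq_zero] at hx ⊢
    obtain ⟨a, ha⟩ := mem_sup_span_singleton.1 hx
    exact mem_sup_span_singleton.2 ⟨a, hf _ (by simpa [mul_sub, mul_left_comm] using ha)⟩
  · intro y
    obtain ⟨y, rfl⟩ := Submodule.Quotient.mk_surjective _ y
    change Quotient.factor hle (Quotient.mk _ y) = 0 ↔ ∃ x, Submodule.mapQ _ _ _ hmul x = _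
    rw [Quotient.factor_mk, Quotient.eq_zero_iff_mem, mem_sup_span_singleton]
    constructor
    · rintro ⟨a, ha⟩
      refine ⟨Submodule.Quotient.mk a, (Submodule.Quotient.eq _).2 ?_⟩
      exact mem_sup_span_singleton.2 ⟨0, by simpa [mul_comm] using I.neg_mem ha⟩
    · rintro ⟨x, hx⟩
      obtain ⟨x, rfl⟩ := Submodule.Quotient.mk_surjective _ x
      obtain ⟨c, hc⟩ := mem_sup_span_singleton.1 ((Submodule.Quotient.eq _).1 hx)
      refine ⟨x - c * w, ?_⟩
      convert I.neg_mem hc using 1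
      simp only [LinearMap.mulLeft_apply]
      ring

theorem Ideal.length_quotient_sup_span_prod {ι : Type*} (I : Ideal A) (s : Finset ι) (f : ι → A)
    (hf : ∀ i ∈ s, ∀ x, f i * x ∈ I → x ∈ I) :
    Module.length R (A ⧸ I ⊔ span {∏ i ∈ s, f i}) =
      ∑ i ∈ s, Module.length R (A ⧸ I ⊔ span {f i}) := by
  classical
  induction s using Finset.induction_on with
  | empty =>
    rw [Finset.prod_empty, span_singleton_one, sup_top_eq, Finset.sum_empty]
    exact Module.length_eq_zero
  | insert i s hi ih =>
    rw [Finset.prod_insert hi, length_quotient_sup_span_mul _ (hf i (s.mem_insert_self i)),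
      ih fun j hj ↦ hf j (Finset.mem_insert_of_mem hj), Finset.sum_insert hi, add_comm]

noncomputable def AlgHom.quotientSupKerEquiv (φ : A →ₐ[R] B) (hφ : Function.Surjective φ)
    (I : Ideal A) : (A ⧸ I ⊔ RingHom.ker φ) ≃ₐ[R] B ⧸ I.map φ :=
  (quotientEquivAlgOfEq R <| by
      ext x
      rw [RingHom.mem_ker, AlgHom.comp_apply, Quotient.mkₐ_eq_mk, Quotient.eq_zero_iff_mem,
        ← mem_comap, comap_map_of_surjective _ hφ, ← RingHom.ker_eq_comap_bot]).trans
    (quotientKerAlgEquivOfSurjective (f := (Quotient.mkₐ R (I.map φ)).comp φ)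
      ((Quotient.mkₐ_surjective R _).comp hφ))

end LengthOfQuotients

section Bivariate

open Polynomial Polynomial.Bivariate Ideal

variable {K : Type*} [Field K]

theorem Polynomial.length_quotient_span {h : K[X]} (hh : h ≠ 0) :
    Module.length K (K[X] ⧸ span {h}) = h.natDegree := by
  let b := AdjoinRoot.powerBasis hh
  have : Module.Finite K (AdjoinRoot h) := .of_basis b.basis
  change Module.length K (AdjoinRoot h) = _
  rw [Module.length_eq_finrank, b.finrank, AdjoinRoot.powerBasis_dim]

theorem Polynomial.Bivariate.length_quotient_span_sup_span_Y_sub_C (Q : K[X][Y]) {c : K[X]}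
    (hc : Q.eval c ≠ 0) :
    Module.length K (K[X][Y] ⧸ span {Q} ⊔ span {Y - C c}) = (Q.eval c).natDegree := by
  let φ : K[X][Y] →ₐ[K] K[X] := (aeval c).restrictScalars K
  have hφ : ∀ t, φ t = t.eval c := fun t ↦ by simp [φ]
  have hker : RingHom.ker φ = span {Y - C c} := by
    rw [← ker_evalRingHom]; ext; simp [RingHom.mem_ker, hφ]
  rw [← hker, (φ.quotientSupKerEquiv (fun s ↦ ⟨C s, by simp [hφ]⟩) _).toLinearEquiv.length_eq,
    map_span, Set.image_singleton, hφ, length_quotient_span hc]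

theorem Polynomial.Bivariate.length_quotient_span_sup_span_C_X (Q : K[X][Y])
    (hQ : Q.map (evalRingHom 0) ≠ 0) :
    Module.length K (K[X][Y] ⧸ span {Q} ⊔ span {C X}) =
      (Q.map (evalRingHom 0)).natDegree := by
  let φ : K[X][Y] →ₐ[K] K[X] := mapAlgHom (aeval 0)
  have hφ : ∀ t, φ t = t.map (evalRingHom 0) := fun t ↦ by simp [φ, coe_mapAlgHom]
  have hker : RingHom.ker φ = span {C X} := by
    have : RingHom.ker φ = RingHom.ker (mapRingHom (evalRingHom (0 : K))) := by
      ext; simp [RingHom.mem_ker, hφ]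
    rw [this, ker_mapRingHom, ker_evalRingHom, map_span, Set.image_singleton, C_0, sub_zero]
  have hs : Function.Surjective φ := fun s ↦ ⟨s.map C, by
    rw [hφ, Polynomial.map_map, show (evalRingHom 0).comp C = RingHom.id K from
      RingHom.ext fun _ ↦ eval_C, Polynomial.map_id]⟩
  rw [← hker, (φ.quotientSupKerEquiv hs _).toLinearEquiv.length_eq,
    map_span, Set.image_singleton, hφ, length_quotient_span hQ]

theorem FiniteField.prod_Y_sub_C_mul_X [Fintype K] :
    ∏ a : K, (Y - C (C a * X) : K[X][Y]) =
      Y ^ Fintype.card K - C (X ^ (Fintype.card K - 1)) * Y := by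
  set q := Fintype.card K
  have hq : 1 < q := Fintype.one_lt_card
  have hXq : (X : K[X]) ^ q = X ^ (q - 1) * X := by rw [← pow_succ, Nat.sub_add_cancel hq.le]
  have hmonic : (Y ^ q - C (X ^ (q - 1)) * Y : K[X][Y]).Monic := by
    refine monic_X_pow_sub ?_
    rw [degree_C_mul_X (pow_ne_zero _ X_ne_zero)]
    exact_mod_cast hq
  let s : Multiset K[X] := Finset.univ.val.map fun a ↦ C a * X
  have hs : s.Nodup :=
    Finset.univ.nodup.map fun a b h ↦ C_injective (mul_right_cancel₀ X_ne_zero h)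
  have hroots : s ≤ (Y ^ q - C (X ^ (q - 1)) * Y : K[X][Y]).roots := by
    refine (Multiset.le_iff_subset hs).2 fun c hc ↦ ?_
    obtain ⟨a, -, rfl⟩ := Multiset.mem_map.1 hc
    rw [mem_roots hmonic.ne_zero, IsRoot, eval_sub, eval_pow, eval_mul, eval_C, eval_X, mul_pow,
      ← C_pow, FiniteField.pow_card, hXq]
    ring
  have hdvd : ∏ a : K, (Y - C (C a * X) : K[X][Y]) ∣ Y ^ q - C (X ^ (q - 1)) * Y := by
    convert (Multiset.prod_X_sub_C_dvd_iff_le_roots hmonic.ne_zero s).2 hroots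
    rw [Finset.prod_eq_multiset_prod, Multiset.map_map]
    rfl
  refine (eq_of_monic_of_dvd_of_natDegree_le (monic_prod_X_sub_C _ _) hmonic hdvd ?_).symm
  rw [natDegree_finsetProd_X_sub_C_eq_card, Finset.card_univ]
  compute_degree
  omega

end Bivariate

section Relations

open Polynomial Polynomial.Bivariate Ideal

variable (R : Type*) [CommRing R]

-- `q` and `r` of the statement, with `m` for `p`, in `R[X][Y]` where `ξ = Y` and `η = C X`.
noncomputable def relQ (m : ℕ) : R[X][Y] :=
  C X ^ (m ^ 2 - m) + Y ^ (m - 1) * (Y ^ (m - 1) - C X ^ (m - 1)) ^ (m - 1)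

noncomputable def relR (m : ℕ) : R[X][Y] :=
  Y * C X * (Y ^ (m - 1) - C X ^ (m - 1))

theorem relQ_map_evalRingHom_zero {m : ℕ} (hm : 2 ≤ m) :
    (relQ R m).map (evalRingHom 0) = X ^ (m ^ 2 - m) := by
  have hm1 : m - 1 ≠ 0 := by omega
  have hexp : m - 1 + (m - 1) * (m - 1) = m ^ 2 - m := by
    obtain ⟨n, rfl⟩ := Nat.exists_eq_add_of_le' (one_le_two.trans hm)
    rw [Nat.add_sub_cancel, show (n + 1) ^ 2 = n + n * n + (n + 1) by ring, Nat.add_sub_cancel]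
  have hm2 : m ^ 2 - m ≠ 0 := by rw [← hexp]; positivity
  simp only [relQ, Polynomial.map_add, Polynomial.map_mul, Polynomial.map_pow, Polynomial.map_sub,
    map_C, Polynomial.map_X, coe_evalRingHom, eval_X, C_0, zero_pow hm2, zero_pow hm1, zero_add,
    sub_zero, ← pow_mul, ← pow_add, hexp]

variable {K : Type*} [Field K] [Fintype K]

theorem relQ_eval_C_mul_X (a : K) :
    (relQ K (Fintype.card K)).eval (C a * X) = X ^ (Fintype.card K ^ 2 - Fintype.card K) := by
  have hq : Fintype.card K - 1 ≠ 0 := Nat.sub_ne_zero_of_lt Fintype.one_lt_card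
  simp only [relQ, eval_add, eval_mul, eval_pow, eval_sub, eval_C, eval_X, mul_pow, ← C_pow]
  rcases eq_or_ne a 0 with rfl | ha
  · simp [hq]
  · simp [FiniteField.pow_card_sub_one_eq_one a ha, hq]

theorem relR_eq_C_X_mul_prod :
    relR K (Fintype.card K) = C X * ∏ a : K, (Y - C (C a * X)) := by
  rw [FiniteField.prod_Y_sub_C_mul_X, relR]
  obtain ⟨n, hn⟩ := Nat.exists_eq_add_of_le' (Fintype.one_lt_card (α := K)).le
  rw [hn, Nat.add_sub_cancel, C_pow]
  ring

theorem length_quotient_relQ_relR :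
    Module.length K (K[X][Y] ⧸ span {relQ K (Fintype.card K), relR K (Fintype.card K)}) =
      (Fintype.card K * (Fintype.card K ^ 2 - 1) : ℕ) := by
  set q := Fintype.card K
  have hq : 2 ≤ q := Fintype.one_lt_card
  have hX : (X : K[X]) ^ (q ^ 2 - q) ≠ 0 := pow_ne_zero _ X_ne_zero
  have hQ₀ := relQ_map_evalRingHom_zero K hq
  have hregY (a : K) : ∀ x, (Y - C (C a * X)) * x ∈ span {relQ K q} → x ∈ span {relQ K q} :=
    fun x ↦ mem_span_singleton_of_mul_mem_of_isRelPrime <| IsRelPrime.symm <|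
      (prime_X_sub_C _).irreducible.isRelPrime_iff_not_dvd.2 <| by
        rw [dvd_iff_isRoot, IsRoot, relQ_eval_C_mul_X]; exact hX
  have hregC : ∀ x, C X * x ∈ span {relQ K q} → x ∈ span {relQ K q} :=
    fun x ↦ mem_span_singleton_of_mul_mem_of_isRelPrime <| IsRelPrime.symm <|
      (prime_C_iff.2 prime_X).irreducible.isRelPrime_iff_not_dvd.2 fun ⟨t, ht⟩ ↦ hX <| by
        rw [← hQ₀, ht, Polynomial.map_mul, map_C, coe_evalRingHom, eval_X, C_0, zero_mul]
  rw [span_insert, relR_eq_C_X_mul_prod, length_quotient_sup_span_mul _ hregC,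
    length_quotient_sup_span_prod _ _ _ fun a _ ↦ hregY a,
    length_quotient_span_sup_span_C_X _ (hQ₀ ▸ hX), hQ₀]
  rw [Finset.sum_congr rfl fun a _ ↦ (length_quotient_span_sup_span_Y_sub_C _
    ((relQ_eval_C_mul_X a).symm ▸ hX)).trans (by rw [relQ_eval_C_mul_X])]
  simp only [natDegree_X_pow, Finset.sum_const, Finset.card_univ, nsmul_eq_mul]
  norm_cast
  change q * (q ^ 2 - q) + (q ^ 2 - q) = q * (q ^ 2 - 1)
  zify [Nat.le_self_pow two_ne_zero q, Nat.one_le_pow 2 q (by omega)]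
  ring

end Relations

open MvPolynomial

theorem stmt_6_general (p : ℕ) (hp : p.Prime)
    (q r : MvPolynomial (Fin 2) (ZMod p))
    (hq : q = X 1 ^ (p ^ 2 - p) +
      X 0 ^ (p - 1) * (X 0 ^ (p - 1) - X 1 ^ (p - 1)) ^ (p - 1))
    (hr : r = X 0 * X 1 * (X 0 ^ (p - 1) - X 1 ^ (p - 1))) :
    Module.finrank (ZMod p)
        (MvPolynomial (Fin 2) (ZMod p) ⧸ Ideal.span {q, r}) = p * (p ^ 2 - 1) := by
  have : Fact p.Prime := ⟨hp⟩
  let E := (Polynomial.Bivariate.equivMvPolynomial (ZMod p)).symm.trans Polynomial.Bivariate.swap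
  have hE : Ideal.span {relQ (ZMod p) p, relR (ZMod p) p} = (Ideal.span {q, r}).map E := by
    rw [Ideal.map_span, Set.image_insert_eq, Set.image_singleton]
    simp only [E, hq, hr, relQ, relR, AlgEquiv.trans_apply, map_add, map_mul, map_sub, map_pow,
      Polynomial.Bivariate.equivMvPolynomial_symm_X_0,
      Polynomial.Bivariate.equivMvPolynomial_symm_X_1]
    rw [Polynomial.Bivariate.swap_X, Polynomial.Bivariate.swap_Y]
  have hlength := length_quotient_relQ_relR (K := ZMod p)
  rw [ZMod.card] at hlength
  rw [Module.finrank_eq_toNat_length, (Ideal.quotientEquivAlg _ _ E hE).toLinearEquiv.length_eq,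
    hlength, ENat.toNat_natCast]

/-- Let `p` be an odd prime.  The quotient of `(ZMod p)[ξ, η]` by the ideal generated by
`q` and `r` has dimension `p·(p² - 1)` as a `(ZMod p)`-vector space. -/
theorem stmt_6 (p : ℕ) (hp : p.Prime) (hodd : Odd p)
    (q r : MvPolynomial (Fin 2) (ZMod p))
    (hq : q = X 1 ^ (p ^ 2 - p) +
      X 0 ^ (p - 1) * (X 0 ^ (p - 1) - X 1 ^ (p - 1)) ^ (p - 1))
    (hr : r = X 0 * X 1 * (X 0 ^ (p - 1) - X 1 ^ (p - 1))) :
    Module.finrank (ZMod p)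
        (MvPolynomial (Fin 2) (ZMod p) ⧸ Ideal.span {q, r}) = p * (p ^ 2 - 1) :=
  stmt_6_general p hp q r hq hr
end

section
/- Let p be an odd prime. The two polynomials q and r are algebraically independent over ZMod p in (ZMod p)[ξ, η]. -/
/-! Substitute `ξ = Y`, `η = t Y` in `k[t][Y]`: with `p = m + 1` this sends `q` to
`g(t) Y^(m(m+1))` and `r` to `t e(t) Y^(m+2)`, where `g(0) = e(0) = 1`. In the image of a
relation `P`, the coefficient of `Y^N` only sees the monomials `ξ^i η^j` of `P` of weight
`m(m+1) i + (m+2) j = N`, which are told apart by `j`; the one with least `j` contributes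
`c_ij t^j` and nothing else reaches `t^j`, so `c_ij = 0`. -/

open MvPolynomial

section

variable {k : Type*} [CommRing k]

theorem Polynomial.sum_C_mul_X_pow_mul_ne_zero {ι : Type*} {s : Finset ι} (hs : s.Nonempty)
    {c : ι → k} (hc : ∀ i ∈ s, c i ≠ 0) {n : ι → ℕ} (hn : Set.InjOn n s) {h : ι → Polynomial k}
    (h0 : ∀ i ∈ s, (h i).eval 0 = 1) :
    ∑ i ∈ s, Polynomial.C (c i) * (Polynomial.X ^ n i * h i) ≠ 0 := by
  obtain ⟨i₀, hi₀, hmin⟩ := s.exists_min_image n hs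
  intro hsum
  have hcoeff := congrArg (Polynomial.coeff · (n i₀)) hsum
  simp only [Polynomial.finsetSum_coeff, Polynomial.coeff_C_mul, Polynomial.coeff_X_pow_mul',
    Polynomial.coeff_zero] at hcoeff
  rw [Finset.sum_eq_single i₀ ?_ (absurd hi₀), if_pos le_rfl, Nat.sub_self,
    Polynomial.coeff_zero_eq_eval_zero, h0 i₀ hi₀, mul_one] at hcoeff
  · exact hc i₀ hi₀ hcoeff
  · intro i hi hne
    have hlt : n i₀ < n i := (hmin i hi).lt_of_ne fun heq => hne (hn hi hi₀ heq.symm)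
    rw [if_neg hlt.not_ge, mul_zero]

theorem coeff_aeval_C_mul_X_pow (a b : ℕ) (g e : Polynomial k) (P : MvPolynomial (Fin 2) k)
    (N : ℕ) :
    (aeval ![Polynomial.C g * Polynomial.X ^ a, Polynomial.C (Polynomial.X * e) * Polynomial.X ^ b]
        P).coeff N =
      ∑ d ∈ P.support with a * d 0 + b * d 1 = N,
        Polynomial.C (P.coeff d) * (Polynomial.X ^ d 1 * (g ^ d 0 * e ^ d 1)) := by
  conv_lhs => rw [P.as_sum]
  simp only [map_sum, aeval_monomial, Finsupp.prod_fintype _ _ (fun _ => pow_zero _),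
    Fin.prod_univ_two, Matrix.cons_val_zero, Matrix.cons_val_one,
    Polynomial.finsetSum_coeff, Finset.sum_filter]
  refine Finset.sum_congr rfl fun d _ => ?_
  have : algebraMap k (Polynomial (Polynomial k)) (P.coeff d) *
      ((Polynomial.C g * Polynomial.X ^ a) ^ d 0 *
        (Polynomial.C (Polynomial.X * e) * Polynomial.X ^ b) ^ d 1) =
      Polynomial.C (Polynomial.C (P.coeff d) * (Polynomial.X ^ d 1 * (g ^ d 0 * e ^ d 1))) *
        Polynomial.X ^ (a * d 0 + b * d 1) := by
    simp only [Polynomial.algebraMap_apply, Polynomial.algebraMap_eq, map_mul, map_pow, mul_pow,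
      ← pow_mul, pow_add]
    ring
  rw [this, Polynomial.coeff_C_mul_X_pow]
  exact if_congr eq_comm rfl rfl

theorem algebraicIndependent_C_mul_X_pow {a : ℕ} (ha : 0 < a) (b : ℕ) {g e : Polynomial k}
    (hg : g.eval 0 = 1) (he : e.eval 0 = 1) :
    AlgebraicIndependent k
      ![Polynomial.C g * Polynomial.X ^ a, Polynomial.C (Polynomial.X * e) * Polynomial.X ^ b] := by
  rw [algebraicIndependent_iff]
  intro P hP
  by_contra hne
  obtain ⟨d₀, hd₀⟩ := support_nonempty.2 hne
  have hcoeff := congrArg (Polynomial.coeff · (a * d₀ 0 + b * d₀ 1)) hP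
  simp only [coeff_aeval_C_mul_X_pow, Polynomial.coeff_zero] at hcoeff
  refine Polynomial.sum_C_mul_X_pow_mul_ne_zero ⟨d₀, by simp [hd₀]⟩ ?_ ?_ ?_ hcoeff
  · intro d hd
    exact mem_support_iff.1 (Finset.mem_filter.1 hd).1
  · intro d hd d' hd' (h1 : d 1 = d' 1)
    have hw := (Finset.mem_filter.1 hd).2.trans (Finset.mem_filter.1 hd').2.symm
    rw [h1, Nat.add_right_cancel_iff] at hw
    ext i
    fin_cases i
    · exact Nat.eq_of_mul_eq_mul_left ha hw
    · exact h1
  · intro d _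
    simp [hg, he]

theorem aeval_X_pow_sub_X_pow (m : ℕ) :
    aeval ![(Polynomial.X : Polynomial (Polynomial k)), Polynomial.C Polynomial.X * Polynomial.X]
      (X 0 ^ m - X 1 ^ m : MvPolynomial (Fin 2) k) =
      Polynomial.C (1 - Polynomial.X ^ m) * Polynomial.X ^ m := by
  simp [mul_pow, sub_mul]

end

theorem stmt_7_general (p : ℕ) (hp : p.Prime)
    (q r : MvPolynomial (Fin 2) (ZMod p))
    (hq : q = X 1 ^ (p ^ 2 - p) +
      X 0 ^ (p - 1) * (X 0 ^ (p - 1) - X 1 ^ (p - 1)) ^ (p - 1))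
    (hr : r = X 0 * X 1 * (X 0 ^ (p - 1) - X 1 ^ (p - 1))) :
    AlgebraicIndependent (ZMod p) ![q, r] := by
  obtain ⟨m, rfl⟩ : ∃ m, p = m + 1 := ⟨p - 1, (Nat.sub_add_cancel hp.one_le).symm⟩
  have hm : 0 < m := Nat.succ_lt_succ_iff.1 hp.two_le
  have hpow : (m + 1) ^ 2 - (m + 1) = m * (m + 1) := by
    rw [Nat.sub_eq_iff_eq_add (Nat.le_self_pow two_ne_zero _)]; ring
  rw [Nat.add_sub_cancel, hpow] at hq
  rw [Nat.add_sub_cancel] at hr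
  let φ := aeval (R := ZMod (m + 1))
    ![(Polynomial.X : Polynomial (Polynomial (ZMod (m + 1)))),
      Polynomial.C Polynomial.X * Polynomial.X]
  have hφq : φ q = Polynomial.C (Polynomial.X ^ (m * (m + 1)) + (1 - Polynomial.X ^ m) ^ m) *
      Polynomial.X ^ (m * (m + 1)) := by
    simp only [φ, hq, map_add, map_mul, map_pow, aeval_X, aeval_X_pow_sub_X_pow,
      Matrix.cons_val_zero, Matrix.cons_val_one, mul_pow, ← pow_mul]
    ring
  have hφr :
      φ r = Polynomial.C (Polynomial.X * (1 - Polynomial.X ^ m)) * Polynomial.X ^ (m + 2) := by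
    simp only [φ, hr, map_mul, aeval_X, aeval_X_pow_sub_X_pow, Matrix.cons_val_zero,
      Matrix.cons_val_one]
    ring
  refine AlgebraicIndependent.of_comp φ ?_
  rw [show φ ∘ ![q, r] = ![φ q, φ r] by ext i; fin_cases i <;> rfl, hφq, hφr]
  exact algebraicIndependent_C_mul_X_pow (Nat.mul_pos hm m.succ_pos) _ (by simp [hm.ne'])
    (by simp [hm.ne'])

/-- Let `p` be an odd prime.  The polynomials
`q = η^(p²-p) + ξ^(p-1)·(ξ^(p-1) - η^(p-1))^(p-1)` and `r = ξ·η·(ξ^(p-1) - η^(p-1))`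
are algebraically independent over `ZMod p` in `(ZMod p)[ξ, η]`. -/
theorem stmt_7 (p : ℕ) (hp : p.Prime) (hodd : Odd p)
    (q r : MvPolynomial (Fin 2) (ZMod p))
    (hq : q = X 1 ^ (p ^ 2 - p) +
      X 0 ^ (p - 1) * (X 0 ^ (p - 1) - X 1 ^ (p - 1)) ^ (p - 1))
    (hr : r = X 0 * X 1 * (X 0 ^ (p - 1) - X 1 ^ (p - 1))) :
    AlgebraicIndependent (ZMod p) ![q, r] :=
  stmt_7_general p hp q r hq hr
end

section
/- Let p be an odd prime, k a field, and ω ∈ k a primitive p-th root of unity. For any integers i, j, i′, j′ with 1 ≤ i, j, i′, j′ ≤ p, (i, j) ≠ (p, p) and (i′, j′) ≠ (p, p), there exists an invertible p×p matrix P over k such that P·(σ^i·τ^j)·P⁻¹ = σ^{i′}·τ^{j′}. In particular, any two elements different from the identity of the subgroup of PGL_p(k) generated by the classes of σ and τ are conjugate in PGL_p(k). -/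
/-!
Index the basis by `ZMod p` instead of `Fin p`, via `t ↦ t + 1`, so that
`σ^m τ^n` is the monomial matrix `e_t ↦ ω^{n t} e_{t+m}`. Each such matrix with `(m, n) ≠ 0` is
conjugate to `τ`. If `m ≠ 0`, the diagonal gauge `diag(ω^{e t² - e m t})` with `2 e m = n`
(solvable as `p` is odd) removes the twist, and a Fourier matrix `(ω^{b t s})` with `b ≠ 0`
conjugates `diag(ω^t)` to the plain shift by `m`. If `m = 0`, the matrix `diag(ω^{n t})` is
conjugate to the shift by `1` by a Fourier matrix as well, hence to `τ`.

In `PGL_p(k)` the classes of `σ` and `τ` commute, because `τσ = ω στ`, and have order `p`, so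
every element of the subgroup they generate is the class of some `σ^m τ^n`.
-/

open Matrix

theorem isConj_of_isUnit {M : Type*} [Monoid M] {q a b : M} (hq : IsUnit q)
    (h : q * a = b * q) : IsConj a b :=
  ⟨hq.unit, by rwa [SemiconjBy, hq.unit_spec]⟩

theorem Units.isConj_of_isConj_val {M : Type*} [Monoid M] {a b : Mˣ} (h : IsConj (a : M) b) :
    IsConj a b := by
  obtain ⟨c, hc⟩ := h
  refine isConj_iff.mpr ⟨c, Units.ext ?_⟩
  rw [Units.val_mul, Units.val_mul, hc.eq, mul_assoc, Units.mul_inv, mul_one]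

theorem exists_pow_mul_pow_eq_of_mem_closure_pair {G : Type*} [Group G] {x y z : G}
    (hxy : Commute x y) (hx : IsOfFinOrder x) (hy : IsOfFinOrder y)
    (hz : z ∈ Subgroup.closure {x, y}) : ∃ m n : ℕ, x ^ m * y ^ n = z := by
  have inv_pow : ∀ {g : G}, IsOfFinOrder g → ∀ m : ℕ, ∃ m' : ℕ, g ^ m' = (g ^ m)⁻¹ := by
    intro g hg m
    obtain ⟨c, hc⟩ :=
      hg.pow.mem_powers_iff_mem_zpowers.mpr (inv_mem (Subgroup.mem_zpowers (g ^ m)))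
    exact ⟨m * c, by rw [pow_mul]; exact hc⟩
  induction hz using Subgroup.closure_induction with
  | mem g hg =>
    rcases hg with rfl | rfl
    · exact ⟨1, 0, by simp⟩
    · exact ⟨0, 1, by simp⟩
  | one => exact ⟨0, 0, by simp⟩
  | mul g h _ _ hg hh =>
    obtain ⟨m, n, rfl⟩ := hg
    obtain ⟨m', n', rfl⟩ := hh
    refine ⟨m + m', n + n', ?_⟩
    rw [pow_add, pow_add, mul_assoc, mul_assoc, (hxy.pow_pow m' n).symm.left_comm]
  | inv g _ hg =>
    obtain ⟨m, n, rfl⟩ := hg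
    obtain ⟨m', hm'⟩ := inv_pow hx m
    obtain ⟨n', hn'⟩ := inv_pow hy n
    exact ⟨m', n', by rw [hm', hn', _root_.mul_inv_rev, (hxy.pow_pow m n).inv_inv.eq]⟩

theorem Matrix.GeneralLinearGroup.commute_mk_of_mul_eq_smul {n R : Type*} [Fintype n]
    [DecidableEq n] [CommRing R] {A B : GL n R} {c : R}
    (h : (B : Matrix n n R) * A = c • ((A : Matrix n n R) * B)) :
    Commute (A : GL n R ⧸ Subgroup.center (GL n R)) B := by
  have hc : B * A / (A * B) ∈ Subgroup.center (GL n R) := by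
    rw [mem_center_iff_val_mem_range_scalar]
    refine ⟨c, ?_⟩
    rw [div_eq_mul_inv, Units.val_mul, Units.val_mul, h, smul_mul_assoc, ← Units.val_mul,
      Units.mul_inv, scalar_apply, smul_one_eq_diagonal]
  exact (QuotientGroup.eq_iff_div_mem.mpr hc).symm

namespace ClockShift

section TwistedShift

variable {G R : Type*} [AddCommGroup G] [DecidableEq G] [CommSemiring R]

def twistedShift (a : G) (c : G → R) : Matrix G G R :=
  of fun s t => if s = t + a then c t else 0

theorem twistedShift_zero_left (c : G → R) : twistedShift 0 c = diagonal c := by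
  ext s t
  by_cases h : s = t <;> simp [twistedShift, h]

theorem smul_twistedShift (r : R) (a : G) (c : G → R) :
    r • twistedShift a c = twistedShift a (r • c) := by
  ext s t
  by_cases h : s = t + a <;> simp [twistedShift, h]

theorem twistedShift_zero_one : twistedShift (0 : G) (1 : G → R) = 1 := by
  rw [twistedShift_zero_left, ← diagonal_one]
  rfl

variable [Fintype G]

theorem twistedShift_mul (a b : G) (c d : G → R) :
    twistedShift a c * twistedShift b d = twistedShift (a + b) fun t => c (t + b) * d t := by
  ext s t
  rw [mul_apply, Finset.sum_eq_single (t + b) (fun r _ hr => by simp [twistedShift, hr])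
    (by simp)]
  simp only [twistedShift, of_apply, add_assoc, add_comm b a, if_true]
  split_ifs <;> simp

theorem twistedShift_one_pow (a : G) (n : ℕ) :
    twistedShift a (1 : G → R) ^ n = twistedShift (n • a) 1 := by
  induction n with
  | zero => rw [pow_zero, zero_smul, twistedShift_zero_one]
  | succ n ih =>
    rw [pow_succ, ih, twistedShift_mul, succ_nsmul]
    simp only [Pi.one_apply, mul_one]
    rfl

theorem diagonal_mul_twistedShift (a : G) (c d : G → R) :
    diagonal d * twistedShift a c = twistedShift a fun t => d (t + a) * c t := by
  rw [← twistedShift_zero_left, twistedShift_mul, zero_add]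

theorem twistedShift_mul_diagonal (a : G) (c d : G → R) :
    twistedShift a c * diagonal d = twistedShift a (c * d) := by
  rw [← twistedShift_zero_left, twistedShift_mul, add_zero]
  simp only [add_zero]
  rfl

end TwistedShift

section Conjugacy

variable {F k : Type*} [Field F] [Fintype F] [DecidableEq F] [Field k] (ψ : AddChar F k)

def fourierMatrix (b : F) : Matrix F F k :=
  of fun t s => ψ (b * t * s)

theorem fourierMatrix_mul_fourierMatrix_neg (hψ : ψ.IsPrimitive) {b : F} (hb : b ≠ 0) :
    fourierMatrix ψ b * fourierMatrix ψ (-b) = (Fintype.card F : k) • 1 := by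
  ext t u
  have hsum : ∑ s, ψ (b * t * s) * ψ (-b * s * u) = ∑ s, ψ (s * (b * (t - u))) := by
    refine Finset.sum_congr rfl fun s _ => ?_
    rw [← AddChar.map_add_eq_mul]
    ring_nf
  simp only [mul_apply, Matrix.smul_apply, one_apply, fourierMatrix, of_apply]
  rw [hsum, AddChar.sum_mulShift _ hψ]
  simp [hb, sub_eq_zero]

theorem isUnit_fourierMatrix (hψ : ψ.IsPrimitive) (hF : (Fintype.card F : k) ≠ 0) {b : F}
    (hb : b ≠ 0) : IsUnit (fourierMatrix ψ b) := by
  refine (isUnit_iff_isUnit_det _).mpr (isUnit_det_of_right_inverse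
    (B := (Fintype.card F : k)⁻¹ • fourierMatrix ψ (-b)) ?_)
  rw [mul_smul_comm, fourierMatrix_mul_fourierMatrix_neg ψ hψ hb, smul_smul, inv_mul_cancel₀ hF,
    one_smul]

theorem fourierMatrix_mul_diagonal (a b : F) :
    fourierMatrix ψ b * diagonal (fun s => ψ (-(b * a) * s)) =
      twistedShift a 1 * fourierMatrix ψ b := by
  ext t s
  rw [mul_diagonal, mul_apply, Finset.sum_eq_single (t - a)
    (fun r _ hr => by simp [twistedShift, ← sub_eq_iff_eq_add, Ne.symm hr])
    (by simp)]
  simp only [fourierMatrix, twistedShift, of_apply, sub_add_cancel, if_true, Pi.one_apply,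
    one_mul, ← AddChar.map_add_eq_mul]
  ring_nf

variable {ψ}

theorem isConj_diagonal_twistedShift_one (hψ : ψ.IsPrimitive) (hF : (Fintype.card F : k) ≠ 0)
    {a j : F} (ha : a ≠ 0) (hj : j ≠ 0) :
    IsConj (diagonal fun s => ψ (j * s)) (twistedShift a 1) := by
  have hb : -(j / a) ≠ 0 := neg_ne_zero.mpr (div_ne_zero hj ha)
  have h := fourierMatrix_mul_diagonal ψ a (-(j / a))
  rw [neg_mul, neg_neg, div_mul_cancel₀ j ha] at h
  exact isConj_of_isUnit (isUnit_fourierMatrix ψ hψ hF hb) h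

theorem isConj_twistedShift_one (h2 : (2 : F) ≠ 0) {a : F} (ha : a ≠ 0) (j : F) :
    IsConj (twistedShift a 1) (twistedShift a fun t => ψ (j * t)) := by
  -- the gauge `t ↦ ψ (e t² - e a t)` has discrete derivative `t ↦ ψ (j t)` along `a`
  set e := j / (2 * a)
  set q : F → F := fun t => e * t ^ 2 - e * a * t
  have hq : IsUnit (diagonal fun t => ψ (q t)) :=
    isUnit_diagonal.mpr (Pi.isUnit_iff.mpr fun t => AddChar.val_isUnit ψ (q t))
  refine isConj_of_isUnit hq ?_
  rw [diagonal_mul_twistedShift, twistedShift_mul_diagonal]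
  congr 1
  ext t
  simp only [Pi.one_apply, mul_one, Pi.mul_apply, ← AddChar.map_add_eq_mul]
  congr 1
  simp only [q, e]
  field_simp
  ring

theorem isConj_diagonal_twistedShift (hψ : ψ.IsPrimitive) (hF : (Fintype.card F : k) ≠ 0)
    (h2 : (2 : F) ≠ 0) {a j : F} (h : ¬(a = 0 ∧ j = 0)) :
    IsConj (diagonal ψ) (twistedShift a fun t => ψ (j * t)) := by
  have hψ1 : diagonal ψ = diagonal fun s => ψ (1 * s) := by simp only [one_mul]
  rw [hψ1]
  by_cases ha : a = 0
  · have hj : j ≠ 0 := fun hj => h ⟨ha, hj⟩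
    rw [ha, twistedShift_zero_left]
    exact (isConj_diagonal_twistedShift_one hψ hF one_ne_zero one_ne_zero).trans
      (isConj_diagonal_twistedShift_one hψ hF one_ne_zero hj).symm
  · exact (isConj_diagonal_twistedShift_one hψ hF ha one_ne_zero).trans
      (isConj_twistedShift_one h2 ha j)

end Conjugacy

section Concrete

variable {p : ℕ} {k : Type*} [Field k]

def shiftMatrix (p : ℕ) (k : Type*) [Field k] : Matrix (Fin p) (Fin p) k :=
  of fun s t => if (s : ℕ) = ((t : ℕ) + 1) % p then 1 else 0

def clockMatrix (p : ℕ) (ω : k) : Matrix (Fin p) (Fin p) k :=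
  diagonal fun t => ω ^ ((t : ℕ) + 1)

theorem clockMatrix_pow_self {ω : k} (hω : ω ^ p = 1) : clockMatrix p ω ^ p = 1 := by
  rw [clockMatrix, diagonal_pow, ← diagonal_one]
  congr 1
  ext t
  rw [Pi.pow_apply, ← pow_mul, mul_comm, pow_mul, hω, one_pow]

variable [NeZero p]

-- `t : Fin p` stands for `t + 1 : ZMod p`, matching the exponent of `ω` in `clockMatrix`
def finShiftEquiv (p : ℕ) [NeZero p] : Fin p ≃ ZMod p where
  toFun t := (t : ℕ) + 1
  invFun x := ⟨(x - 1).val, ZMod.val_lt _⟩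
  left_inv t := Fin.ext (by simp [ZMod.val_cast_of_lt t.isLt])
  right_inv x := by simp

def toFinMatrix : Matrix (ZMod p) (ZMod p) k ≃ₐ[k] Matrix (Fin p) (Fin p) k :=
  reindexAlgEquiv k k (finShiftEquiv p).symm

theorem toFinMatrix_apply (M : Matrix (ZMod p) (ZMod p) k) (s t : Fin p) :
    toFinMatrix M s t = M (finShiftEquiv p s) (finShiftEquiv p t) :=
  rfl

theorem shiftMatrix_eq_toFinMatrix : shiftMatrix p k = toFinMatrix (twistedShift 1 1) := by
  ext s t
  rw [toFinMatrix_apply]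
  simp only [shiftMatrix, twistedShift, finShiftEquiv, Equiv.coe_fn_mk, of_apply, Pi.one_apply,
    add_left_inj]
  congr 1
  rw [eq_iff_iff, ← Nat.cast_add_one, ZMod.natCast_eq_natCast_iff', Nat.mod_eq_of_lt s.isLt]

theorem clockMatrix_eq_toFinMatrix {ω : k} (hω : ω ^ p = 1) :
    clockMatrix p ω = toFinMatrix (diagonal (AddChar.zmodChar p hω)) := by
  ext s t
  rw [toFinMatrix_apply, clockMatrix]
  by_cases h : s = t
  · subst h
    rw [diagonal_apply_eq, diagonal_apply_eq, finShiftEquiv, Equiv.coe_fn_mk, ← Nat.cast_add_one,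
      AddChar.zmodChar_apply']
  · simp [diagonal_apply_ne _ h, (finShiftEquiv p).injective.ne h]

theorem shiftMatrix_pow_self : shiftMatrix p k ^ p = 1 := by
  rw [shiftMatrix_eq_toFinMatrix, ← map_pow, twistedShift_one_pow, nsmul_one, ZMod.natCast_self,
    twistedShift_zero_one, map_one]

theorem clockMatrix_mul_shiftMatrix {ω : k} (hω : ω ^ p = 1) :
    clockMatrix p ω * shiftMatrix p k = ω • (shiftMatrix p k * clockMatrix p ω) := by
  rw [clockMatrix_eq_toFinMatrix hω, shiftMatrix_eq_toFinMatrix, ← map_mul, ← map_mul,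
    ← map_smul, diagonal_mul_twistedShift, twistedShift_mul_diagonal, smul_twistedShift]
  have hχ : AddChar.zmodChar p hω 1 = ω := by simpa using AddChar.zmodChar_apply' hω 1
  congr 2
  ext t
  simp [AddChar.map_add_eq_mul, hχ, mul_comm]

theorem shiftMatrix_pow_mul_clockMatrix_pow {ω : k} (hω : ω ^ p = 1) (m n : ℕ) :
    shiftMatrix p k ^ m * clockMatrix p ω ^ n =
      toFinMatrix (twistedShift (m : ZMod p) fun t => AddChar.zmodChar p hω (n * t)) := by
  rw [clockMatrix_eq_toFinMatrix hω, shiftMatrix_eq_toFinMatrix, ← map_pow, ← map_pow, ← map_mul,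
    twistedShift_one_pow, diagonal_pow, twistedShift_mul_diagonal, nsmul_one]
  congr 2
  ext t
  simp [← AddChar.map_nsmul_eq_pow]

theorem isConj_shiftMatrix_pow_mul_clockMatrix_pow [Fact p.Prime] (hp2 : p ≠ 2) {ω : k}
    (hω : IsPrimitiveRoot ω p) {m n : ℕ} (h : ¬(p ∣ m ∧ p ∣ n)) :
    IsConj (shiftMatrix p k ^ m * clockMatrix p ω ^ n) (clockMatrix p ω) := by
  have hF : (Fintype.card (ZMod p) : k) ≠ 0 := by
    rw [ZMod.card]
    exact hω.neZero'.out
  have h2 : (2 : ZMod p) ≠ 0 := Ring.two_ne_zero (by rwa [ZMod.ringChar_zmod_n])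
  have hmn : ¬((m : ZMod p) = 0 ∧ (n : ZMod p) = 0) := by
    simpa only [ZMod.natCast_eq_zero_iff] using h
  rw [shiftMatrix_pow_mul_clockMatrix_pow hω.pow_eq_one, clockMatrix_eq_toFinMatrix hω.pow_eq_one]
  have hψ := AddChar.zmodChar_primitive_of_primitive_root p hω
  exact (MonoidHomClass.toMonoidHom (toFinMatrix (p := p) (k := k))).map_isConj
    (isConj_diagonal_twistedShift hψ hF h2 hmn) |>.symm

theorem isConj_mk_clock_of_mem_closure [Fact p.Prime] (hp2 : p ≠ 2) {ω : k}
    (hω : IsPrimitiveRoot ω p) {S T : GL (Fin p) k}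
    (hS : (S : Matrix (Fin p) (Fin p) k) = shiftMatrix p k)
    (hT : (T : Matrix (Fin p) (Fin p) k) = clockMatrix p ω)
    {a : GL (Fin p) k ⧸ Subgroup.center (GL (Fin p) k)}
    (ha : a ∈ Subgroup.closure {QuotientGroup.mk S, QuotientGroup.mk T}) (ha1 : a ≠ 1) :
    IsConj a (QuotientGroup.mk T) := by
  have hSp : S ^ p = 1 := Units.ext <| by
    rw [Units.val_pow_eq_pow_val, hS, shiftMatrix_pow_self, Units.val_one]
  have hTp : T ^ p = 1 := Units.ext <| by
    rw [Units.val_pow_eq_pow_val, hT, clockMatrix_pow_self hω.pow_eq_one, Units.val_one]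
  have hST := Matrix.GeneralLinearGroup.commute_mk_of_mul_eq_smul (A := S) (B := T)
    (by rw [hS, hT]; exact clockMatrix_mul_shiftMatrix hω.pow_eq_one)
  have hfin : ∀ g : GL (Fin p) k, g ^ p = 1 →
      IsOfFinOrder (g : GL (Fin p) k ⧸ Subgroup.center (GL (Fin p) k)) := fun g hg =>
    isOfFinOrder_iff_pow_eq_one.mpr
      ⟨p, NeZero.pos p, by rw [← QuotientGroup.mk_pow, hg, QuotientGroup.mk_one]⟩
  obtain ⟨m, n, rfl⟩ := exists_pow_mul_pow_eq_of_mem_closure_pair hST (hfin S hSp) (hfin T hTp) ha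
  have hmn : ¬(p ∣ m ∧ p ∣ n) := by
    rintro ⟨⟨c, rfl⟩, ⟨d, rfl⟩⟩
    apply ha1
    rw [← QuotientGroup.mk_pow, ← QuotientGroup.mk_pow, pow_mul, pow_mul, hSp, hTp, one_pow,
      one_pow, QuotientGroup.mk_one, one_mul]
  have hconj : IsConj (S ^ m * T ^ n) T := Units.isConj_of_isConj_val <| by
    rw [Units.val_mul, Units.val_pow_eq_pow_val, Units.val_pow_eq_pow_val, hS, hT]
    exact isConj_shiftMatrix_pow_mul_clockMatrix_pow hp2 hω hmn
  simpa using (QuotientGroup.mk' (Subgroup.center (GL (Fin p) k))).map_isConj hconj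

end Concrete

end ClockShift

open ClockShift in
/-- Let `p` be an odd prime, `k` a field and `ω ∈ k` a primitive `p`-th root of unity.
With `σ` the cyclic permutation matrix and `τ = diag(ω, ω², …, ω^{p-1}, 1)`: for all
`1 ≤ i, j, i', j' ≤ p` with `(i, j) ≠ (p, p)` and `(i', j') ≠ (p, p)` there is an
invertible matrix `P` with `P·(σ^i·τ^j)·P⁻¹ = σ^{i'}·τ^{j'}`.  In particular any two
non-identity elements of the subgroup of `PGL_p(k) = GL_p(k)/center` generated by the
classes of `σ` and `τ` are conjugate. -/
theorem stmt_11 (p : ℕ) (hp : p.Prime) (hodd : Odd p) (k : Type*) [Field k]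
    (ω : k) (hω : IsPrimitiveRoot ω p)
    (σ τ : Matrix (Fin p) (Fin p) k)
    (hσ : σ = Matrix.of fun s t : Fin p => if (s : ℕ) = ((t : ℕ) + 1) % p then 1 else 0)
    (hτ : τ = Matrix.diagonal fun t : Fin p => ω ^ ((t : ℕ) + 1)) :
    (∀ i j i' j' : ℕ, 1 ≤ i → i ≤ p → 1 ≤ j → j ≤ p → 1 ≤ i' → i' ≤ p → 1 ≤ j' → j' ≤ p →
      (i, j) ≠ (p, p) → (i', j') ≠ (p, p) →
      ∃ P : (Matrix (Fin p) (Fin p) k)ˣ,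
        (P : Matrix (Fin p) (Fin p) k) * (σ ^ i * τ ^ j) *
            ((P⁻¹ : (Matrix (Fin p) (Fin p) k)ˣ) : Matrix (Fin p) (Fin p) k) =
          σ ^ i' * τ ^ j') ∧
    (∀ S T : (Matrix (Fin p) (Fin p) k)ˣ,
      (S : Matrix (Fin p) (Fin p) k) = σ → (T : Matrix (Fin p) (Fin p) k) = τ →
      ∀ a b : (Matrix (Fin p) (Fin p) k)ˣ ⧸ Subgroup.center (Matrix (Fin p) (Fin p) k)ˣ,
        a ∈ Subgroup.closure {QuotientGroup.mk S, QuotientGroup.mk T} →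
        b ∈ Subgroup.closure {QuotientGroup.mk S, QuotientGroup.mk T} →
        a ≠ 1 → b ≠ 1 → IsConj a b) := by
  have := Fact.mk hp
  have hp2 : p ≠ 2 := by rintro rfl; exact absurd hodd (by decide)
  have hσ' : σ = shiftMatrix p k := hσ
  have hτ' : τ = clockMatrix p ω := hτ
  subst hσ' hτ'
  refine ⟨fun i j i' j' hi hip hj hjp hi' hip' hj' hjp' hij hij' => ?_,
    fun S T hS hT a b ha hb ha1 hb1 =>
      (isConj_mk_clock_of_mem_closure hp2 hω hS hT ha ha1).trans
        (isConj_mk_clock_of_mem_closure hp2 hω hS hT hb hb1).symm⟩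
  have hdvd : ∀ m n, 1 ≤ m → m ≤ p → 1 ≤ n → n ≤ p → (m, n) ≠ (p, p) → ¬(p ∣ m ∧ p ∣ n) := by
    rintro m n hm hmp hn hnp hmn ⟨hpm, hpn⟩
    rw [le_antisymm hmp (Nat.le_of_dvd hm hpm), le_antisymm hnp (Nat.le_of_dvd hn hpn)] at hmn
    exact hmn rfl
  obtain ⟨P, hP⟩ :=
    (isConj_shiftMatrix_pow_mul_clockMatrix_pow hp2 hω (hdvd i j hi hip hj hjp hij)).trans
      (isConj_shiftMatrix_pow_mul_clockMatrix_pow hp2 hω (hdvd i' j' hi' hip' hj' hjp' hij')).symm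
  exact ⟨P, by rw [hP.eq, mul_assoc, Units.mul_inv, mul_one]⟩
end

section
/- Let p be a prime and let k be a natural number with 0 ≤ k ≤ p. In the polynomial ring ℤ[x₁, …, x_p, t] one has σ_k(x₁ + t, …, x_p + t) = Σ_{i=0}^{k} C(p − k + i, i) · t^i · σ_{k−i}(x₁, …, x_p), where C(n, i) denotes the binomial coefficient. -/
/-!
Expanding `∏_{i ∈ A} (x_i + t)` over the subsets `T ⊆ A` writes `σ_k(x + t)` as a sum of terms
`x_T t^(k - |T|)`, where each `T` occurs once for every `k`-subset `A ⊇ T`, that is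
`C(p - |T|, k - |T|)` times. Grouping by `j = |T|` and reindexing by `i = k - j` gives the identity.
-/

open MvPolynomial Finset

namespace Finset

variable {ι R M : Type*}

theorem prod_add_const_eq_sum_powersetCard [CommSemiring R] (s : Finset ι) (x : ι → R) (t : R) :
    ∏ i ∈ s, (x i + t) =
      ∑ j ∈ range (#s + 1), t ^ (#s - j) * ∑ T ∈ s.powersetCard j, ∏ i ∈ T, x i := by
  classical
  rw [prod_add, sum_powerset]
  refine sum_congr rfl fun j _ => ?_
  rw [mul_sum]
  refine sum_congr rfl fun T hT => ?_
  obtain ⟨hTs, rfl⟩ := mem_powersetCard.mp hT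
  rw [prod_const, card_sdiff_of_subset hTs, mul_comm]

theorem sum_powersetCard_sum_powersetCard [AddCommMonoid M] (s : Finset ι) (f : Finset ι → M)
    {j k : ℕ} (hjk : j ≤ k) :
    ∑ S ∈ s.powersetCard k, ∑ T ∈ S.powersetCard j, f T =
      (#s - j).choose (k - j) • ∑ T ∈ s.powersetCard j, f T := by
  classical
  rw [sum_comm' (t' := s.powersetCard j) (s' := fun T => {S ∈ s.powersetCard k | T ⊆ S}), smul_sum]
  · refine sum_congr rfl fun T hT => ?_
    obtain ⟨hTs, rfl⟩ := mem_powersetCard.mp hT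
    rw [sum_const, card_filter_powersetCard_subset T s k hTs hjk]
  · intro S T
    simp only [mem_powersetCard, mem_filter]
    constructor
    · rintro ⟨⟨hSs, hSk⟩, hTS, rfl⟩
      exact ⟨⟨⟨hSs, hSk⟩, hTS⟩, hTS.trans hSs, rfl⟩
    · rintro ⟨⟨⟨hSs, hSk⟩, hTS⟩, _, rfl⟩
      exact ⟨⟨hSs, hSk⟩, hTS, rfl⟩

end Finset

namespace MvPolynomial

variable {σ R S : Type*} [Fintype σ] [CommSemiring R] [CommSemiring S] [Algebra R S]

theorem aeval_esymm_add_const (x : σ → S) (t : S) (k : ℕ) :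
    aeval (fun i => x i + t) (esymm σ R k) =
      ∑ j ∈ range (k + 1),
        ((Fintype.card σ - j).choose (k - j) : S) * t ^ (k - j) * aeval x (esymm σ R j) := by
  simp only [esymm, map_sum, map_prod, aeval_X]
  calc ∑ A ∈ univ.powersetCard k, ∏ i ∈ A, (x i + t)
      = ∑ A ∈ univ.powersetCard k, ∑ j ∈ range (k + 1),
          t ^ (k - j) * ∑ T ∈ A.powersetCard j, ∏ i ∈ T, x i := by
        refine sum_congr rfl fun A hA => ?_
        rw [prod_add_const_eq_sum_powersetCard, (mem_powersetCard.mp hA).2]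
    _ = ∑ j ∈ range (k + 1), t ^ (k - j) *
          ∑ A ∈ univ.powersetCard k, ∑ T ∈ A.powersetCard j, ∏ i ∈ T, x i := by
        rw [sum_comm]
        simp only [mul_sum]
    _ = _ := by
        refine sum_congr rfl fun j hj => ?_
        rw [sum_powersetCard_sum_powersetCard _ _ (Nat.lt_succ_iff.mp (mem_range.mp hj)),
          card_univ, nsmul_eq_mul]
        ring

end MvPolynomial

theorem stmt_12_general (p k : ℕ) (hk : k ≤ p) :
    aeval (fun i : Fin p => X (some i) + (X none : MvPolynomial (Option (Fin p)) ℤ))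
        (esymm (Fin p) ℤ k) =
      ∑ i ∈ Finset.range (k + 1),
        (Nat.choose (p - k + i) i : MvPolynomial (Option (Fin p)) ℤ) * X none ^ i *
          rename some (esymm (Fin p) ℤ (k - i)) := by
  rw [aeval_esymm_add_const]
  conv_rhs => rw [← sum_range_reflect]
  refine sum_congr rfl fun j hj => ?_
  have hjk : j ≤ k := Nat.lt_succ_iff.mp (mem_range.mp hj)
  rw [Fintype.card_fin, rename_eq_aeval, add_tsub_cancel_right,
    show p - k + (k - j) = p - j by omega, Nat.sub_sub_self hjk]
  rfl

/-- Let `p` be a prime and `0 ≤ k ≤ p`.  In `ℤ[x₁, …, x_p, t]` one has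
`σ_k(x₁ + t, …, x_p + t) = Σ_{i=0}^{k} C(p-k+i, i) · t^i · σ_{k-i}(x₁, …, x_p)`,
where `σ_j` is the `j`-th elementary symmetric polynomial.  Here the ambient ring is
`MvPolynomial (Option (Fin p)) ℤ`, with `t = X none` and `x_i = X (some i)`. -/
theorem stmt_12 (p k : ℕ) (hp : p.Prime) (hk : k ≤ p) :
    aeval (fun i : Fin p => X (some i) + (X none : MvPolynomial (Option (Fin p)) ℤ))
        (esymm (Fin p) ℤ k) =
      ∑ i ∈ Finset.range (k + 1),
        (Nat.choose (p - k + i) i : MvPolynomial (Option (Fin p)) ℤ) * X none ^ i *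
          rename some (esymm (Fin p) ℤ (k - i)) :=
  stmt_12_general p k hk
end

section
/- Let p be a prime and let G be a subgroup of the symmetric group S_p, acting on ℤ[x₁, …, x_p] by permuting the variables. If f ∈ ℤ[x₁, …, x_p] satisfies g·f − f ∈ (σ₁) for every g ∈ G, then there exists h ∈ ℤ[x₁, …, x_p] with g·h = h for every g ∈ G and f − h ∈ (σ₁). Equivalently, the projection ℤ[x₁, …, x_p] → ℤ[x₁, …, x_p]/(σ₁) maps the G-invariant subring onto the G-invariants of the quotient, inducing an isomorphism (ℤ[x₁,…,x_p]^G)/(σ₁·ℤ[x₁,…,x_p]^G) ≅ (ℤ[x₁,…,x_p]/(σ₁))^G. -/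
/-!
Writing `g • f - f = σ₁ * c g` makes `c` a 1-cocycle of `G` with values in `ℤ[x₁, …, x_p]`,
because `σ₁` is invariant and not a zero divisor. This module is the permutation module on the
monomials, and `H¹` of a finite group with coefficients in a permutation module over a
torsion-free group vanishes. Indeed, at a monomial fixed by `s` the coefficient of `c (s ^ n)` is
`n` times that of `c s`, so it vanishes since `s ^ orderOf s = 1`; hence the coefficient of `c g`
at `m` depends only on `g⁻¹ • m`, and reading it off at orbit representatives gives `u` with
`c g = g • u - u`. Then `h = f - σ₁ * u` is invariant.
-/

open MvPolynomial groupCohomology MulAction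

section PermutationModule

-- `G` acts on `X →₀ A` by permuting the support: `(g • f) x = f (g⁻¹ • x)`.
attribute [local instance] Finsupp.comapDistribMulAction

variable {G X A : Type*} [Group G] [MulAction G X] [AddCommGroup A] {f : G → X →₀ A}

namespace groupCohomology.IsCocycle₁

theorem apply_mul (hf : IsCocycle₁ f) (g h : G) (x : X) :
    f (g * h) x = f h (g⁻¹ • x) + f g x := by
  rw [hf g h, Finsupp.add_apply, Finsupp.comapSMul_apply]

theorem apply_pow_of_smul_eq (hf : IsCocycle₁ f) {s : G} {x : X} (hs : s • x = x) (n : ℕ) :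
    f (s ^ n) x = n • f s x := by
  induction n with
  | zero => simp [map_one_of_isCocycle₁ hf]
  | succ n ih => rw [pow_succ', hf.apply_mul, inv_smul_eq_iff.mpr hs.symm, ih, succ_nsmul]

variable [Finite G] [IsAddTorsionFree A]

theorem apply_eq_zero_of_smul_eq (hf : IsCocycle₁ f) {s : G} {x : X} (hs : s • x = x) :
    f s x = 0 := by
  have h := hf.apply_pow_of_smul_eq hs (orderOf s)
  rw [pow_orderOf_eq_one, map_one_of_isCocycle₁ hf, Finsupp.zero_apply, eq_comm,
    smul_eq_zero] at h
  exact h.resolve_left (orderOf_pos s).ne'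

theorem apply_eq_of_smul_eq (hf : IsCocycle₁ f) {g g' : G} {x y : X} (hg : g • y = x)
    (hg' : g' • y = x) : f g x = f g' x := by
  have hfix : (g⁻¹ * g') • y = y := by rw [mul_smul, hg', ← hg, inv_smul_smul]
  rw [← mul_inv_cancel_left g g', hf.apply_mul, ← hg, inv_smul_smul,
    hf.apply_eq_zero_of_smul_eq hfix, zero_add]

end groupCohomology.IsCocycle₁

theorem groupCohomology.isCoboundary₁_of_isCocycle₁_finsupp [Finite G] [IsAddTorsionFree A]
    (hf : IsCocycle₁ f) : IsCoboundary₁ f := by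
  let rep : X → X := fun x => (Quotient.mk (orbitRel G X) x).out
  have rep_smul (g : G) (x : X) : rep (g • x) = rep x :=
    congrArg Quotient.out (Quotient.sound (mem_orbit x g))
  choose γ hγ using fun x =>
    mem_orbit_iff.mp ((orbitRel G X).symm (Quotient.mk_out (s := orbitRel G X) x))
  have hu : (⋃ g, ((f g).support : Set X)).Finite :=
    Set.finite_iUnion fun g => (f g).support.finite_toSet
  let u : X →₀ A := Finsupp.ofSupportFinite (fun x => f (γ x) x) <|
    hu.subset fun x hx => Set.mem_iUnion.mpr ⟨γ x, Finsupp.mem_support_iff.mpr hx⟩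
  have hu_apply (g : G) (x : X) : u x = u (g⁻¹ • x) + f g x := by
    have hmul : (g * γ (g⁻¹ • x)) • rep x = x := by
      rw [mul_smul, ← rep_smul g⁻¹, hγ, smul_inv_smul]
    calc u x = f (g * γ (g⁻¹ • x)) x := hf.apply_eq_of_smul_eq (hγ x) hmul
      _ = u (g⁻¹ • x) + f g x := hf.apply_mul _ _ x
  refine ⟨-u, fun g => Finsupp.ext fun x => ?_⟩
  rw [Finsupp.sub_apply, Finsupp.comapSMul_apply, Finsupp.neg_apply, Finsupp.neg_apply,
    hu_apply g x]
  abel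

end PermutationModule

section Rename

open Equiv

attribute [local instance] Finsupp.comapMulAction Finsupp.comapDistribMulAction

variable {σ R : Type*}

theorem MvPolynomial.coeff_rename_perm [CommSemiring R] (g : Perm σ) (q : MvPolynomial σ R)
    (d : σ →₀ ℕ) : (rename g q).coeff d = q.coeff (g⁻¹ • d) := by
  conv_lhs => rw [← smul_inv_smul g d]
  exact coeff_rename_mapDomain g g.injective q _

theorem MvPolynomial.exists_rename_sub_eq [CommRing R] [IsAddTorsionFree R]
    (G : Subgroup (Perm σ)) [Finite G] {c : G → MvPolynomial σ R}
    (hc : ∀ g h : G, c (g * h) = rename (g : Perm σ) (c h) + c g) :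
    ∃ u : MvPolynomial σ R, ∀ g : G, rename (g : Perm σ) u - u = c g := by
  have hcoeff : IsCocycle₁ fun g => AddMonoidAlgebra.coeff (c g) := fun g h => by
    ext d
    rw [Finsupp.add_apply, Finsupp.comapSMul_apply]
    change coeff d (c (g * h)) = coeff (g⁻¹ • d) (c h) + coeff d (c g)
    rw [hc, coeff_add, coeff_rename_perm]
    rfl
  obtain ⟨u, hu⟩ := isCoboundary₁_of_isCocycle₁_finsupp hcoeff
  refine ⟨AddMonoidAlgebra.ofCoeff u, fun g => MvPolynomial.ext _ _ fun d => ?_⟩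
  have hud := congrArg (· d) (hu g)
  simp only [Finsupp.sub_apply, Finsupp.comapSMul_apply] at hud
  rw [coeff_sub, coeff_rename_perm]
  exact hud

end Rename

open Equiv in
theorem MvPolynomial.exists_invariant_sub_mem_span_singleton {σ R : Type*} [CommRing R]
    [IsDomain R] [IsAddTorsionFree R] (G : Subgroup (Perm σ)) [Finite G]
    {s f : MvPolynomial σ R} (hs : ∀ g ∈ G, rename g s = s)
    (hf : ∀ g ∈ G, rename g f - f ∈ Ideal.span {s}) :
    ∃ h : MvPolynomial σ R, (∀ g ∈ G, rename g h = h) ∧ f - h ∈ Ideal.span {s} := by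
  rcases eq_or_ne s 0 with rfl | hs0
  · refine ⟨f, fun g hg => ?_, by simp⟩
    simpa [sub_eq_zero] using hf g hg
  choose c hc using fun g : G => Ideal.mem_span_singleton'.mp (hf g g.2)
  replace hc (g : G) : rename (g : Perm σ) f = f + c g * s := by rw [hc]; ring
  have hcocycle (g h : G) : c (g * h) = rename (g : Perm σ) (c h) + c g := by
    refine mul_right_cancel₀ hs0 ?_
    have hgh := hc (g * h)
    rw [Subgroup.coe_mul, Perm.coe_mul, ← rename_comp_rename, AlgHom.comp_apply, hc h, map_add,
      map_mul, hs g g.2, hc g] at hgh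
    linear_combination -hgh
  obtain ⟨u, hu⟩ := exists_rename_sub_eq G hcocycle
  refine ⟨f - u * s, fun g hg => ?_, Ideal.mem_span_singleton'.mpr ⟨u, by ring⟩⟩
  rw [map_sub, map_mul, hs g hg, hc ⟨g, hg⟩]
  linear_combination (-s) * hu ⟨g, hg⟩

theorem stmt_13_general (p : ℕ) (G : Subgroup (Equiv.Perm (Fin p)))
    (f : MvPolynomial (Fin p) ℤ)
    (hf : ∀ g ∈ G, rename (⇑g) f - f ∈
      Ideal.span {(∑ i : Fin p, X i : MvPolynomial (Fin p) ℤ)}) :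
    ∃ h : MvPolynomial (Fin p) ℤ,
      (∀ g ∈ G, rename (⇑g) h = h) ∧
      f - h ∈ Ideal.span {(∑ i : Fin p, X i : MvPolynomial (Fin p) ℤ)} := by
  refine exists_invariant_sub_mem_span_singleton G (fun g _ => ?_) hf
  simp only [map_sum, rename_X]
  exact Equiv.sum_comp g X

/-- Let `p` be a prime and `G` a subgroup of `S_p` acting on `ℤ[x₁, …, x_p]` by
permuting the variables.  If `f` satisfies `g·f - f ∈ (σ₁)` for all `g ∈ G`, then there
is an `h` with `g·h = h` for all `g ∈ G` and `f - h ∈ (σ₁)`; i.e. the `G`-invariant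
subring surjects onto the `G`-invariants of `ℤ[x₁, …, x_p]/(σ₁)`. -/
theorem stmt_13 (p : ℕ) (hp : p.Prime) (G : Subgroup (Equiv.Perm (Fin p)))
    (f : MvPolynomial (Fin p) ℤ)
    (hf : ∀ g ∈ G, rename (⇑g) f - f ∈
      Ideal.span {(∑ i : Fin p, X i : MvPolynomial (Fin p) ℤ)}) :
    ∃ h : MvPolynomial (Fin p) ℤ,
      (∀ g ∈ G, rename (⇑g) h = h) ∧
      f - h ∈ Ideal.span {(∑ i : Fin p, X i : MvPolynomial (Fin p) ℤ)} :=
  stmt_13_general p G f hf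
end

section
/- Let p ≥ 2 and m ≥ 1 be natural numbers. The number of partitions of m all of whose parts lie between 2 and p equals the number of partitions of m with all parts at most p minus the number of partitions of m − 1 with all parts at most p; that is, r(m, p) = π(m, p) − π(m − 1, p). -/
/-!
Removing one part equal to `1` is a bijection from the partitions of `n + 1` with parts at most
`p` that contain a `1` onto the partitions of `n` with parts at most `p`. The partitions of
`n + 1` with parts at most `p` that contain no `1` are exactly those with parts in `[2, p]`, so
`π(n + 1, p) = π(n, p) + r(n + 1, p)`.
-/

theorem Nat.card_subtype_eq_card_and_add_card_and_not {α : Type*} [Finite α] (p q : α → Prop) :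
    Nat.card {x // p x} = Nat.card {x // p x ∧ q x} + Nat.card {x // p x ∧ ¬q x} := by
  classical
  rw [← Nat.card_sum]
  exact Nat.card_congr <| (Equiv.sumCompl fun x : {x // p x} => q x).symm.trans <|
    Equiv.sumCongr (Equiv.subtypeSubtypeEquivSubtypeInter p q)
      (Equiv.subtypeSubtypeEquivSubtypeInter p fun x => ¬q x)

namespace Nat.Partition

variable {n a : ℕ} {s : ℕ → Prop}

theorem forall_mem_parts_iff_forall_mem_erase {P : n.Partition} (haP : a ∈ P.parts) (hs : s a) :
    (∀ i ∈ P.parts, s i) ↔ ∀ i ∈ P.parts.erase a, s i := by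
  conv_lhs => rw [← Multiset.cons_erase haP]
  simp only [Multiset.forall_mem_cons, hs, true_and]

def restrictedWithPartEquiv (ha1 : 1 ≤ a) (ha : a ≤ n) (hs : s a) :
    {P : n.Partition // (∀ i ∈ P.parts, s i) ∧ a ∈ P.parts} ≃
      {Q : (n - a).Partition // ∀ i ∈ Q.parts, s i} :=
  ((Equiv.subtypeEquivRight fun _ => and_comm).trans
    (Equiv.subtypeSubtypeEquivSubtypeInter (fun P : n.Partition => a ∈ P.parts)
      fun P => ∀ i ∈ P.parts, s i).symm).trans <|
    (partitionWithPartEquiv ha1 ha).subtypeEquiv fun P => by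
      rw [partitionWithPartEquiv_apply_parts]
      exact forall_mem_parts_iff_forall_mem_erase P.2 hs

theorem forall_mem_parts_two_le_and_iff {P : n.Partition} :
    (∀ i ∈ P.parts, 2 ≤ i ∧ s i) ↔ (∀ i ∈ P.parts, s i) ∧ 1 ∉ P.parts := by
  refine ⟨fun h => ⟨fun i hi => (h i hi).2, fun h1 => absurd (h 1 h1).1 (by decide)⟩,
    fun ⟨h, h1⟩ i hi => ⟨?_, h i hi⟩⟩
  have := P.parts_pos hi
  have : i ≠ 1 := fun hi1 => h1 (hi1 ▸ hi)
  omega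

theorem card_restricted_succ_eq_add (hs : s 1) :
    Nat.card {P : (n + 1).Partition // ∀ i ∈ P.parts, s i} =
      Nat.card {P : n.Partition // ∀ i ∈ P.parts, s i} +
        Nat.card {P : (n + 1).Partition // ∀ i ∈ P.parts, 2 ≤ i ∧ s i} := by
  rw [Nat.card_subtype_eq_card_and_add_card_and_not _ fun P : (n + 1).Partition => 1 ∈ P.parts,
    Nat.card_congr (restrictedWithPartEquiv le_rfl (by omega) hs)]
  simp only [forall_mem_parts_two_le_and_iff]
  -- the remaining types differ only by `n + 1 - 1` versus `n`, which agree definitionally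
  rfl

end Nat.Partition

/-- Let `p ≥ 2` and `m ≥ 1`.  The number of partitions of `m` with all parts in
`[2, p]` equals the number of partitions of `m` with all parts at most `p` minus the
number of partitions of `m - 1` with all parts at most `p`. -/
theorem stmt_14 (p m : ℕ) (hp : 2 ≤ p) (hm : 1 ≤ m) :
    Nat.card {P : Nat.Partition m // ∀ i ∈ P.parts, 2 ≤ i ∧ i ≤ p} =
      Nat.card {P : Nat.Partition m // ∀ i ∈ P.parts, i ≤ p} -
        Nat.card {P : Nat.Partition (m - 1) // ∀ i ∈ P.parts, i ≤ p} := by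
  obtain ⟨n, rfl⟩ : ∃ n, m = n + 1 := ⟨m - 1, by omega⟩
  rw [Nat.Partition.card_restricted_succ_eq_add (s := (· ≤ p)) (by omega), Nat.add_sub_cancel,
    Nat.add_sub_cancel_left]
end

section
/- Let p be a prime and let f ∈ ℤ[x₁, …, x_p] be homogeneous of degree d, invariant under the cyclic permutation of the variables x₁ ↦ x₂ ↦ ⋯ ↦ x_p ↦ x₁. If p does not divide d, then p divides the integer f(1, 1, …, 1). -/
/-!
Give an exponent vector `m` the weight `∑ j, j * m j ∈ ZMod p`. Rotating the variables fixes
the coefficients of `f` and raises the weight of each monomial of degree `d` by `d`, so the sums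
of the coefficients of `f` over the `p` weight classes are invariant under a shift by `d`. As `d`
is a unit mod `p`, all these `p` sums are equal, and `f(1, …, 1)`, their total, is `p` times one
of them.
-/

open MvPolynomial

theorem ZMod.apply_eq_apply_zero_of_periodic {n : ℕ} {β : Type*} {F : ZMod n → β} {c : ZMod n}
    (hF : Function.Periodic F c) (hc : IsUnit c) (b : ZMod n) : F b = F 0 := by
  obtain ⟨u, rfl⟩ := hc
  have hb : b = ((b * ↑u⁻¹ : ZMod n).cast : ℤ) * ↑u := by
    rw [ZMod.intCast_zmod_cast, mul_assoc, Units.inv_mul, mul_one]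
  rw [hb]
  exact hF.int_mul_eq _

theorem Finset.sum_eq_card_nsmul_sum_filter_of_shift {α M : Type*} [AddCommMonoid M] {n : ℕ}
    [NeZero n] (s : Finset α) (g : α → M) (e : α ≃ α) (w : α → ZMod n) {c : ZMod n}
    (hc : IsUnit c) (hs : ∀ a, a ∈ s ↔ e a ∈ s) (hg : ∀ a ∈ s, g (e a) = g a)
    (hw : ∀ a ∈ s, w (e a) = w a + c) :
    ∑ a ∈ s, g a = n • ∑ a ∈ s with w a = 0, g a := by
  set S : ZMod n → M := fun b => ∑ a ∈ s with w a = b, g a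
  have hS : Function.Periodic S c := fun b => by
    refine (Finset.sum_equiv e (fun a => ?_) fun a ha => ?_).symm
    · simp only [Finset.mem_filter]
      constructor
      · rintro ⟨ha, rfl⟩
        exact ⟨(hs a).1 ha, hw a ha⟩
      · rintro ⟨ha, hwa⟩
        have ha' := (hs a).2 ha
        exact ⟨ha', add_right_cancel ((hw a ha').symm.trans hwa)⟩
    · exact (hg a (Finset.mem_filter.1 ha).1).symm
  calc ∑ a ∈ s, g a = ∑ b, S b := (Finset.sum_fiberwise s w g).symm
    _ = ∑ _ : ZMod n, S 0 := Fintype.sum_congr _ _ (ZMod.apply_eq_apply_zero_of_periodic hS hc)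
    _ = n • S 0 := by rw [Finset.sum_const, Finset.card_univ, ZMod.card]

theorem MvPolynomial.coeff_equivMapDomain_of_rename_eq {σ R : Type*} [CommSemiring R]
    {e : Equiv.Perm σ} {f : MvPolynomial σ R} (hf : rename e f = f) (m : σ →₀ ℕ) :
    coeff (m.equivMapDomain e) f = coeff m f := by
  conv_lhs => rw [← hf]
  rw [Finsupp.equivMapDomain_eq_mapDomain, coeff_rename_mapDomain e e.injective]

theorem MvPolynomial.IsHomogeneous.degree_eq_of_mem_support {σ R : Type*} [CommSemiring R]
    {f : MvPolynomial σ R} {d : ℕ} (hf : f.IsHomogeneous d) {m : σ →₀ ℕ} (hm : m ∈ f.support) :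
    m.degree = d :=
  of_not_not fun h => mem_support_iff.1 hm (hf.coeff_eq_zero h)

theorem MvPolynomial.eval_one_eq_sum_coeff {σ R : Type*} [CommSemiring R]
    (f : MvPolynomial σ R) : eval (fun _ => 1) f = ∑ m ∈ f.support, coeff m f := by
  simp [eval_eq]

def cyclicWeight {n : ℕ} (m : Fin n →₀ ℕ) : ZMod n := ∑ j : Fin n, ((j : ℕ) : ZMod n) * m j

theorem cyclicWeight_equivMapDomain_finRotate {n : ℕ} (m : Fin n →₀ ℕ) :
    cyclicWeight (m.equivMapDomain (finRotate n)) = cyclicWeight m + m.degree := by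
  unfold cyclicWeight
  rw [← Equiv.sum_comp (finRotate n), Finsupp.degree_eq_sum]
  push_cast
  rw [← Finset.sum_add_distrib]
  refine Finset.sum_congr rfl fun j _ => ?_
  have : NeZero n := j.neZero
  simp only [finRotate_apply, Fin.val_add, Fin.coe_ofNat_eq_mod, Nat.add_mod_mod, ZMod.natCast_mod,
    Nat.cast_add, Nat.cast_one, Finsupp.equivMapDomain_apply, finRotate_symm_apply,
    add_sub_cancel_right]
  ring

/-- Let `p` be a prime and `f ∈ ℤ[x₁, …, x_p]` homogeneous of degree `d` and invariant
under the cyclic permutation `x₁ ↦ x₂ ↦ ⋯ ↦ x_p ↦ x₁` of the variables.  If `p ∤ d`,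
then `p` divides `f(1, 1, …, 1)`. -/
theorem stmt_15 (p : ℕ) (hp : p.Prime) (d : ℕ) (f : MvPolynomial (Fin p) ℤ)
    (hhom : f.IsHomogeneous d)
    (hinv : rename (⇑(finRotate p)) f = f)
    (hd : ¬ p ∣ d) :
    (p : ℤ) ∣ eval (fun _ => (1 : ℤ)) f := by
  have : Fact p.Prime := ⟨hp⟩
  have hunit : IsUnit (d : ZMod p) :=
    isUnit_iff_ne_zero.2 ((ZMod.natCast_eq_zero_iff _ _).not.2 hd)
  have hcoeff := coeff_equivMapDomain_of_rename_eq hinv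
  rw [eval_one_eq_sum_coeff, Finset.sum_eq_card_nsmul_sum_filter_of_shift _ _
    (Finsupp.equivCongrLeft (finRotate p)) cyclicWeight hunit, nsmul_eq_mul]
  · exact dvd_mul_right _ _
  · simp [Finsupp.equivCongrLeft_apply, hcoeff]
  · exact fun m _ => hcoeff m
  · intro m hm
    rw [Finsupp.equivCongrLeft_apply, cyclicWeight_equivMapDomain_finRotate,
      hhom.degree_eq_of_mem_support hm]
end
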